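/- arXiv:1104.3762 — 6 statements merged into one kernel-verified Lean document; each statement's English description precedes it below -/
import Mathlib

section
/- Let a ≥ 1 and b ≥ 3 be integers. The map S_{a,b} : B → B is not ergodic with respect to Lebesgue measure: there exists a measurable set E ⊆ B with S_{a,b}^{-1}(E) = E up to a Lebesgue-null set such that both E and B∖E have positive Lebesgue measure. -/
open MeasureTheory Filter Topology

/-- `Λⁿ`: points of `ℝⁿ` with nonnegative, nondecreasing coordinates. -/
def Lambda (n : ℕ) : Set (Fin n → ℝ) := {x | (∀ i, 0 ≤ x i) ∧ Monotone x}

/-- The vector `(x₁,…,x_a, x_{a+1}-x_a,…,x_{a+b}-x_a)` (0-based indexing). -/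
noncomputable def subVec (a b : ℕ) (x : Fin (a + b) → ℝ) : Fin (a + b) → ℝ :=
  fun j => if (j : ℕ) < a then x j else x j - x ⟨a - 1, by have := j.isLt; omega⟩

/-- The map `T_{a,b}`: nondecreasing rearrangement of `subVec a b x`. -/
noncomputable def Tab (a b : ℕ) (x : Fin (a + b) → ℝ) : Fin (a + b) → ℝ :=
  subVec a b x ∘ Tuple.sort (subVec a b x)
/-- `B`: points of `ℝⁿ` with `0 ≤ x₁ ≤ … ≤ xₙ ≤ 1`. -/
def BSet (n : ℕ) : Set (Fin n → ℝ) :=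
  {x | (∀ i, 0 ≤ x i) ∧ Monotone x ∧ ∀ i, x i ≤ 1}

/-- The projected map `S_{a,b} : B → B`: with `y = T_{a,b}(x₁,…,x_{a+b-1},1)`,
`S_{a,b}(x) = (y₁/y_{a+b},…,y_{a+b-1}/y_{a+b})`. -/
noncomputable def Sab (a b : ℕ) (x : Fin (a + b - 1) → ℝ) : Fin (a + b - 1) → ℝ :=
  fun i =>
    Tab a b (fun j => if h : (j : ℕ) < a + b - 1 then x ⟨j, h⟩ else 1)
        ⟨i, by have := i.isLt; omega⟩ /
    Tab a b (fun j => if h : (j : ℕ) < a + b - 1 then x ⟨j, h⟩ else 1)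
        ⟨a + b - 1, by have := i.isLt; omega⟩

/-!
`S_{a,b}` maps `B` into itself and has two disjoint forward-invariant regions with nonempty
interior: the points of total mass `∑ xᵢ ≤ 1/3`, on which the mass never increases, and the points
with `∑ xᵢ + 1 - 2 x_{a+b-1} ≤ 1/4`, on which the last coordinate dominates. On the second region,
writing `s = x_a` for the coordinate subtracted by `T_{a,b}`, this quantity `U` transforms as
`U ↦ (U - (b - 2) s) / (1 - s)`; this is where `b ≥ 3` enters. The set of points of `B` whose orbit
eventually enters the first region is then exactly invariant, contains the first region and misses
the second.
-/

open Set

theorem Fin.sum_univ_castSucc_of_eq {M : Type*} [AddCommMonoid M] {n N : ℕ} (h : n + 1 = N)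
    (f : Fin N → M) : ∑ j, f j = ∑ i : Fin n, f ⟨i, by omega⟩ + f ⟨n, by omega⟩ := by
  subst h
  exact Fin.sum_univ_castSucc f

theorem Fin.strictMono_snoc {α : Type*} [Preorder α] {n : ℕ} {p : Fin n → α} {x : α}
    (hp : StrictMono p) (hx : ∀ i, p i < x) : StrictMono (Fin.snoc p x : Fin (n + 1) → α) := by
  intro i j hij
  induction j using Fin.lastCases with
  | last =>
    induction i using Fin.lastCases with
    | last => exact absurd hij (lt_irrefl _)
    | cast i => simpa using hx i
  | cast j =>
    induction i using Fin.lastCases with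
    | last => exact absurd hij (not_lt.2 (Fin.le_last _))
    | cast i => simpa using hp (Fin.castSucc_lt_castSucc_iff.1 hij)

theorem one_half_le_max_one_sub (t : ℝ) : 1 / 2 ≤ max t (1 - t) := by
  rcases le_total t (1 / 2) with h | h
  · exact le_max_of_le_right (by linarith)
  · exact le_max_of_le_left h

namespace Tuple

variable {α : Type*} [LinearOrder α] {N : ℕ} {v : Fin N → α}

theorem comp_sort_eq_of_last {i : Fin N} (hi : (i : ℕ) + 1 = N) {t : α} (hle : ∀ j, v j ≤ t)
    {j₀ : Fin N} (hj₀ : t ≤ v j₀) : (v ∘ sort v) i = t := by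
  refine le_antisymm (hle _) (hj₀.trans ?_)
  calc v j₀ = (v ∘ sort v) ((sort v).symm j₀) := by simp
    _ ≤ (v ∘ sort v) i := monotone_sort v (Fin.le_def.2 (by omega))

theorem comp_sort_eq_of_penultimate {i : Fin N} (hi : (i : ℕ) + 2 = N) {j₀ j₁ : Fin N}
    (hne : j₁ ≠ j₀) (h₁₀ : v j₁ ≤ v j₀) (hle : ∀ j, j ≠ j₀ → v j ≤ v j₁) :
    (v ∘ sort v) i = v j₁ := by
  set σ := sort v
  let top : Fin N := ⟨i + 1, by omega⟩
  have hσ : ∀ j, v j = (v ∘ σ) (σ.symm j) := by simp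
  -- `≤`: one of `σ i`, `σ top` is not `j₀`; `≥`: one of `σ⁻¹ j₀`, `σ⁻¹ j₁` is at most `i`.
  apply le_antisymm
  · by_cases h : σ i = j₀
    · have htop : σ top ≠ j₀ := fun h' => by
        have := congrArg Fin.val (σ.injective (h.trans h'.symm))
        simp [top] at this
      exact (monotone_sort v (Fin.le_def.2 (by simp [top]))).trans (hle _ htop)
    · exact hle _ h
  · have : σ.symm j₁ ≤ i ∨ σ.symm j₀ ≤ i := by
      by_contra! h
      have h₀ : (σ.symm j₀ : ℕ) = (σ.symm j₁ : ℕ) := by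
        have := (σ.symm j₀).isLt; have := (σ.symm j₁).isLt
        rw [Fin.lt_def] at h; omega
      exact hne (σ.symm.injective (Fin.ext h₀.symm))
    rcases this with h | h
    · exact (hσ j₁).trans_le (monotone_sort v h)
    · exact h₁₀.trans ((hσ j₀).trans_le (monotone_sort v h))

end Tuple

theorem measurable_of_countable_cover {α β ι : Type*} [MeasurableSpace α] [MeasurableSpace β]
    [Countable ι] {f : α → β} {A : ι → Set α} {g : ι → α → β} (hA : ∀ i, MeasurableSet (A i))
    (hg : ∀ i, Measurable (g i)) (hcov : ⋃ i, A i = univ) (hfg : ∀ i, EqOn f (g i) (A i)) :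
    Measurable f := by
  intro s hs
  have : f ⁻¹' s = ⋃ i, A i ∩ g i ⁻¹' s := by
    ext x
    obtain ⟨i, hi⟩ := mem_iUnion.1 (hcov.symm ▸ mem_univ x : x ∈ ⋃ i, A i)
    simp only [mem_preimage, mem_iUnion, mem_inter_iff]
    exact ⟨fun hx => ⟨i, hi, hfg i hi ▸ hx⟩, fun ⟨j, hj, hx⟩ => (hfg j hj).symm ▸ hx⟩
  rw [this]
  exact .iUnion fun i => (hA i).inter (hg i hs)

theorem measurableSet_setOf_monotone {N : ℕ} : MeasurableSet {v : Fin N → ℝ | Monotone v} := by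
  simp only [Monotone, ofPred_forall]
  exact .iInter fun i => .iInter fun j => .iInter fun _ =>
    measurableSet_le (measurable_pi_apply i) (measurable_pi_apply j)

theorem Tuple.measurable_comp_sort_apply {N : ℕ} (i : Fin N) :
    Measurable fun v : Fin N → ℝ => (v ∘ sort v) i := by
  refine measurable_of_countable_cover (A := fun σ : Equiv.Perm (Fin N) => {v | Monotone (v ∘ σ)})
    (g := fun σ v => v (σ i)) (fun σ => ?_) (fun σ => measurable_pi_apply _) ?_ ?_
  · exact measurableSet_setOf_monotone.preimage
      (measurable_pi_lambda _ fun j => measurable_pi_apply _)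
  · exact eq_univ_of_forall fun v => mem_iUnion.2 ⟨sort v, monotone_sort v⟩
  · intro σ v hv
    exact (congrFun (comp_sort_eq_comp_iff_monotone.2 hv) i).symm

theorem exists_invariant_of_mapsTo {α : Type*} [MeasurableSpace α] {f : α → α}
    (hf : Measurable f) {B A C : Set α} (hB : MeasurableSet B) (hA : MeasurableSet A)
    (hAB : A ⊆ B) (hfB : MapsTo f B B) (hfA : MapsTo f A A) (hfC : MapsTo f C C)
    (hAC : Disjoint A C) :
    ∃ E, MeasurableSet E ∧ E ⊆ B ∧ B ∩ f ⁻¹' E = E ∧ A ⊆ E ∧ Disjoint C E := by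
  refine ⟨B ∩ ⋃ k, f^[k] ⁻¹' A, hB.inter (.iUnion fun k => hf.iterate k hA), inter_subset_left,
    ?_, fun x hx => ⟨hAB hx, mem_iUnion.2 ⟨0, hx⟩⟩, ?_⟩
  · ext x
    simp only [mem_inter_iff, mem_preimage, mem_iUnion]
    constructor
    · rintro ⟨hx, -, k, hk⟩
      exact ⟨hx, k + 1, hk⟩
    · rintro ⟨hx, ⟨_ | k, hk⟩⟩
      · exact ⟨hx, hfB hx, 0, hfA hk⟩
      · exact ⟨hx, hfB hx, k, hk⟩
  · refine disjoint_left.2 fun x hx ⟨_, hE⟩ => ?_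
    obtain ⟨k, hk⟩ := mem_iUnion.1 hE
    exact disjoint_left.1 hAC hk (hfC.iterate k hx)

section Simplex

variable {n : ℕ}

theorem measurableSet_BSet (n : ℕ) : MeasurableSet (BSet n) := by
  simp only [BSet, ofPred_and, ofPred_forall]
  exact (MeasurableSet.iInter fun i =>
      measurableSet_le measurable_const (measurable_pi_apply i)).inter
    (measurableSet_setOf_monotone.inter
      (MeasurableSet.iInter fun i => measurableSet_le (measurable_pi_apply i) measurable_const))

theorem BSet_mem_nhds {p : Fin n → ℝ} (h0 : ∀ i, 0 < p i) (hp : StrictMono p)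
    (h1 : ∀ i, p i < 1) : BSet n ∈ 𝓝 p := by
  have hlt : ∀ᶠ x in 𝓝 p, ∀ i j, i < j → x i < x j :=
    Filter.eventually_all.2 fun i => Filter.eventually_all.2 fun j =>
      Filter.eventually_imp_distrib_left.2 fun hij =>
        (continuous_apply i).continuousAt.eventually_lt (continuous_apply j).continuousAt (hp hij)
  filter_upwards [Filter.eventually_all.2 fun i =>
      (continuous_apply i).continuousAt.eventually_const_lt (h0 i),
    Filter.eventually_all.2 fun i =>
      (continuous_apply i).continuousAt.eventually_lt_const (h1 i), hlt] with x hx0 hx1 hx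
  exact ⟨fun i => (hx0 i).le, (StrictMono.monotone hx), fun i => (hx1 i).le⟩

def staircase (n : ℕ) (ε : ℝ) : Fin n → ℝ := fun i => ((i : ℝ) + 1) * ε

theorem staircase_pos {ε : ℝ} (hε : 0 < ε) (i : Fin n) : 0 < staircase n ε i := by
  unfold staircase
  positivity

theorem strictMono_staircase {ε : ℝ} (hε : 0 < ε) : StrictMono (staircase n ε) := by
  intro i j hij
  have : (i : ℝ) < j := by exact_mod_cast hij
  unfold staircase
  nlinarith

theorem staircase_le {ε : ℝ} (hε : 0 < ε) (i : Fin n) : staircase n ε i ≤ n * ε := by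
  have : (i : ℝ) + 1 ≤ n := by exact_mod_cast i.isLt
  unfold staircase
  nlinarith

theorem sum_staircase_le {ε : ℝ} (hε : 0 < ε) : ∑ i, staircase n ε i ≤ n * (n * ε) :=
  calc ∑ i, staircase n ε i ≤ ∑ _i : Fin n, n * ε :=
        Finset.sum_le_sum fun i _ => staircase_le hε i
    _ = n * (n * ε) := by simp

noncomputable def lastCoord (x : Fin n → ℝ) : ℝ :=
  if h : n = 0 then 0 else x ⟨n - 1, by omega⟩

theorem lastCoord_eq {x : Fin n → ℝ} (k : Fin n) (hk : (k : ℕ) + 1 = n) : lastCoord x = x k := by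
  rw [lastCoord, dif_neg (by omega)]
  exact congrArg x (Fin.ext (by simp only; omega))

theorem continuous_lastCoord : Continuous (lastCoord : (Fin n → ℝ) → ℝ) := by
  unfold lastCoord
  split_ifs <;> fun_prop

variable {x : Fin n → ℝ}

theorem le_lastCoord (hx : x ∈ BSet n) (i : Fin n) : x i ≤ lastCoord x := by
  have := i.isLt
  rw [lastCoord_eq ⟨n - 1, by omega⟩ (by simp; omega)]
  exact hx.2.1 (Fin.le_def.2 (by simp; omega))

theorem lastCoord_le_one (hx : x ∈ BSet n) : lastCoord x ≤ 1 := by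
  rcases Nat.eq_zero_or_pos n with rfl | hn
  · simp [lastCoord]
  · rw [lastCoord_eq ⟨n - 1, by omega⟩ (by simp; omega)]
    exact hx.2.2 _

theorem lastCoord_le_sum (hx : x ∈ BSet n) : lastCoord x ≤ ∑ i, x i := by
  rcases Nat.eq_zero_or_pos n with rfl | hn
  · simp [lastCoord]
  · rw [lastCoord_eq ⟨n - 1, by omega⟩ (by simp; omega)]
    exact Finset.single_le_sum (fun i _ => hx.1 i) (Finset.mem_univ _)

theorem add_lastCoord_le_sum (hx : x ∈ BSet n) {i : Fin n} (hi : (i : ℕ) + 1 ≠ n) :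
    x i + lastCoord x ≤ ∑ j, x j := by
  have hn : i ≠ ⟨n - 1, by omega⟩ := fun h => hi (by rw [h]; simp; omega)
  rw [lastCoord_eq ⟨n - 1, by omega⟩ (by simp; omega), ← Finset.sum_pair hn]
  exact Finset.sum_le_sum_of_subset_of_nonneg (Finset.subset_univ _) fun j _ _ => hx.1 j

end Simplex

section Regions

variable {n : ℕ}

noncomputable def lastExcess (x : Fin n → ℝ) : ℝ := ∑ i, x i + 1 - 2 * lastCoord x

theorem continuous_lastExcess : Continuous (lastExcess : (Fin n → ℝ) → ℝ) :=
  ((continuous_finsetSum _ fun i _ => continuous_apply i).add continuous_const).sub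
    (continuous_const.mul continuous_lastCoord)

def smallSumSet (n : ℕ) : Set (Fin n → ℝ) := BSet n ∩ {x | ∑ i, x i ≤ 1 / 3}

def heavyLastSet (n : ℕ) : Set (Fin n → ℝ) := BSet n ∩ {x | lastExcess x ≤ 1 / 4}

theorem measurableSet_smallSumSet (n : ℕ) : MeasurableSet (smallSumSet n) :=
  (measurableSet_BSet n).inter (measurableSet_le (by fun_prop) measurable_const)

theorem three_quarters_le_lastCoord {x : Fin n → ℝ} (hx : x ∈ heavyLastSet n) :
    3 / 4 ≤ lastCoord x := by
  have h : lastExcess x ≤ 1 / 4 := hx.2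
  rw [lastExcess] at h
  linarith [lastCoord_le_sum hx.1]

theorem le_lastCoord_sub_of_mem_heavyLastSet {x : Fin n → ℝ} (hx : x ∈ heavyLastSet n)
    {i : Fin n} (hi : (i : ℕ) + 1 ≠ n) : x i ≤ lastCoord x - 3 / 4 := by
  have h : lastExcess x ≤ 1 / 4 := hx.2
  rw [lastExcess] at h
  linarith [add_lastCoord_le_sum hx.1 hi]

theorem disjoint_smallSumSet_heavyLastSet (n : ℕ) : Disjoint (smallSumSet n) (heavyLastSet n) :=
  disjoint_left.2 fun x hA hC => by
    have h : ∑ i, x i ≤ 1 / 3 := hA.2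
    linarith [three_quarters_le_lastCoord hC, lastCoord_le_sum hC.1]

theorem volume_smallSumSet_pos (n : ℕ) : 0 < volume (smallSumSet n) := by
  set ε : ℝ := 1 / (4 * (n + 1) ^ 2)
  have hε : 0 < ε := by positivity
  have hnε : n * ε < 1 / 4 := by
    rw [mul_one_div, div_lt_div_iff₀ (by positivity) (by norm_num)]
    nlinarith
  have hsum : ∑ i, staircase n ε i < 1 / 3 := by
    refine (sum_staircase_le hε).trans_lt ?_
    rw [← mul_assoc, mul_one_div, div_lt_div_iff₀ (by positivity) (by norm_num)]
    nlinarith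
  refine Measure.measure_pos_of_mem_nhds volume (x := staircase n ε) (Filter.inter_mem
    (BSet_mem_nhds (staircase_pos hε) (strictMono_staircase hε)
      fun i => (staircase_le hε i).trans_lt (by linarith)) ?_)
  exact ((continuous_finsetSum _ fun i _ => continuous_apply i).tendsto _
    |>.eventually_lt_const hsum).mono fun x hx => hx.le

theorem volume_heavyLastSet_pos (hn : 0 < n) : 0 < volume (heavyLastSet n) := by
  obtain ⟨m, rfl⟩ : ∃ m, n = m + 1 := ⟨n - 1, by omega⟩
  set ε : ℝ := 1 / (8 * (m + 1) ^ 2)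
  have hε : 0 < ε := by positivity
  have hmε : m * (m * ε) + ε < 1 / 4 := by
    rw [← mul_assoc, ← add_one_mul, mul_one_div, div_lt_div_iff₀ (by positivity) (by norm_num)]
    nlinarith
  have hmε' : m * ε < 1 / 2 := by
    rw [mul_one_div, div_lt_div_iff₀ (by positivity) (by norm_num)]
    nlinarith
  have hε' : ε < 1 / 4 := by nlinarith [mul_nonneg (Nat.cast_nonneg m : (0 : ℝ) ≤ m) hε.le]
  have hp := staircase_le (n := m) hε
  set q : Fin (m + 1) → ℝ := Fin.snoc (staircase m ε) (1 - ε)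
  have hq : lastExcess q < 1 / 4 := by
    rw [lastExcess, Fin.sum_univ_castSucc, lastCoord_eq (Fin.last _) (by simp)]
    simp only [q, Fin.snoc_castSucc, Fin.snoc_last]
    linarith [sum_staircase_le (n := m) hε]
  refine Measure.measure_pos_of_mem_nhds volume (x := q) (Filter.inter_mem
    (BSet_mem_nhds (fun i => ?_) (Fin.strictMono_snoc (strictMono_staircase hε)
      fun i => by linarith [hp i]) fun i => ?_) ?_)
  · induction i using Fin.lastCases with
    | last => simp only [q, Fin.snoc_last]; linarith
    | cast i => simpa only [q, Fin.snoc_castSucc] using staircase_pos hε i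
  · induction i using Fin.lastCases with
    | last => simp only [q, Fin.snoc_last]; linarith
    | cast i => simp only [q, Fin.snoc_castSucc]; linarith [hp i]
  · exact (continuous_lastExcess.tendsto q |>.eventually_lt_const hq).mono fun x hx => hx.le

end Regions

section Dynamics

variable {a b : ℕ}

theorem sum_subVec (y : Fin (a + b) → ℝ) (h : a - 1 < a + b) :
    ∑ j, subVec a b y j = ∑ j, y j - b * y ⟨a - 1, h⟩ := by
  have e : subVec a b y = fun j : Fin (a + b) =>
      if (j : ℕ) < a then y j else y j - y ⟨a - 1, h⟩ := rfl
  simp only [e, Fin.sum_univ_add, Fin.val_castAdd, Fin.is_lt, ↓reduceIte, Fin.val_natAdd,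
    add_lt_iff_neg_left, not_lt_zero, Finset.sum_sub_distrib, Finset.sum_const, Finset.card_univ,
    Fintype.card_fin, nsmul_eq_mul]
  ring

theorem sum_Tab (y : Fin (a + b) → ℝ) (h : a - 1 < a + b) :
    ∑ j, Tab a b y j = ∑ j, y j - b * y ⟨a - 1, h⟩ :=
  (Equiv.sum_comp (Tuple.sort (subVec a b y)) (subVec a b y)).trans (sum_subVec y h)

theorem measurable_Tab (j : Fin (a + b)) :
    Measurable fun y : Fin (a + b) → ℝ => Tab a b y j := by
  refine (Tuple.measurable_comp_sort_apply j).comp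
    (measurable_pi_lambda (subVec a b) fun k => ?_)
  unfold subVec
  split_ifs <;> fun_prop

noncomputable def snocOne (a b : ℕ) (x : Fin (a + b - 1) → ℝ) : Fin (a + b) → ℝ :=
  fun j => if h : (j : ℕ) < a + b - 1 then x ⟨j, h⟩ else 1

theorem measurable_snocOne : Measurable (snocOne a b) :=
  measurable_pi_lambda _ fun j => by
    unfold snocOne
    split_ifs <;> fun_prop

theorem Sab_apply (x : Fin (a + b - 1) → ℝ) (i : Fin (a + b - 1)) :
    Sab a b x i = Tab a b (snocOne a b x) ⟨i, by have := i.isLt; omega⟩ /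
      Tab a b (snocOne a b x) ⟨a + b - 1, by have := i.isLt; omega⟩ := rfl

theorem measurable_Sab : Measurable (Sab a b) :=
  measurable_pi_lambda _ fun _ =>
    ((measurable_Tab _).comp measurable_snocOne).div ((measurable_Tab _).comp measurable_snocOne)

/-- The paper's `x_a`, the coordinate subtracted by `T_{a,b}` (junk `0` when the index is out
of range). -/
noncomputable def pivot (a b : ℕ) (x : Fin (a + b - 1) → ℝ) : ℝ :=
  if h : a - 1 < a + b - 1 then x ⟨a - 1, h⟩ else 0

variable {x : Fin (a + b - 1) → ℝ}

theorem pivot_eq (ha : 1 ≤ a) (hb : 1 ≤ b) : pivot a b x = x ⟨a - 1, by omega⟩ :=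
  dif_pos (by omega)

theorem sum_snocOne (hab : 1 ≤ a + b) : ∑ j, snocOne a b x j = ∑ i, x i + 1 := by
  rw [Fin.sum_univ_castSucc_of_eq (by omega : a + b - 1 + 1 = a + b)]
  simp [snocOne]

theorem subVec_snocOne_of_lt (hb : 1 ≤ b) {j : Fin (a + b)} (hj : (j : ℕ) < a) :
    subVec a b (snocOne a b x) j = x ⟨j, by omega⟩ := by
  simp [subVec, snocOne, hj, show (j : ℕ) < a + b - 1 by omega]

theorem subVec_snocOne_of_le {j : Fin (a + b)} (hj : a ≤ j) (hj' : (j : ℕ) < a + b - 1) :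
    subVec a b (snocOne a b x) j = x ⟨j, hj'⟩ - pivot a b x := by
  simp [subVec, snocOne, pivot, hj', show ¬ (j : ℕ) < a by omega,
    show a - 1 < a + b - 1 by omega]

theorem subVec_snocOne_last (ha : 1 ≤ a) (hb : 1 ≤ b) {j : Fin (a + b)}
    (hj : (j : ℕ) = a + b - 1) : subVec a b (snocOne a b x) j = 1 - pivot a b x := by
  simp [subVec, snocOne, pivot, hj, show ¬ a + b - 1 < a by omega,
    show a - 1 < a + b - 1 by omega]

section OnB

variable (ha : 1 ≤ a) (hb : 1 ≤ b) (hx : x ∈ BSet (a + b - 1))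
include ha hb hx

theorem subVec_snocOne_nonneg (j : Fin (a + b)) : 0 ≤ subVec a b (snocOne a b x) j := by
  have := j.isLt
  rcases lt_or_ge (j : ℕ) a with hja | hja
  · rw [subVec_snocOne_of_lt hb hja]
    exact hx.1 _
  rcases lt_or_ge (j : ℕ) (a + b - 1) with hjb | hjb
  · rw [subVec_snocOne_of_le hja hjb, pivot_eq ha hb, sub_nonneg]
    exact hx.2.1 (Fin.le_def.2 (by simp; omega))
  · rw [subVec_snocOne_last ha hb (by omega), pivot_eq ha hb, sub_nonneg]
    exact hx.2.2 _

theorem subVec_snocOne_le_max (j : Fin (a + b)) :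
    subVec a b (snocOne a b x) j ≤ max (pivot a b x) (1 - pivot a b x) := by
  have := j.isLt
  rcases lt_or_ge (j : ℕ) a with hja | hja
  · rw [subVec_snocOne_of_lt hb hja, pivot_eq ha hb]
    exact le_max_of_le_left (hx.2.1 (Fin.le_def.2 (by simp; omega)))
  rcases lt_or_ge (j : ℕ) (a + b - 1) with hjb | hjb
  · rw [subVec_snocOne_of_le hja hjb]
    exact le_max_of_le_right (by linarith [hx.2.2 ⟨j, hjb⟩])
  · rw [subVec_snocOne_last ha hb (by omega)]
    exact le_max_right _ _

theorem Tab_snocOne_last :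
    Tab a b (snocOne a b x) ⟨a + b - 1, by omega⟩ = max (pivot a b x) (1 - pivot a b x) := by
  rcases max_choice (pivot a b x) (1 - pivot a b x) with h | h
  · refine Tuple.comp_sort_eq_of_last (j₀ := ⟨a - 1, by omega⟩) (by simp; omega)
      (subVec_snocOne_le_max ha hb hx) ?_
    rw [subVec_snocOne_of_lt hb (by simp; omega), h, pivot_eq ha hb]
  · refine Tuple.comp_sort_eq_of_last (j₀ := ⟨a + b - 1, by omega⟩) (by simp; omega)
      (subVec_snocOne_le_max ha hb hx) ?_
    rw [subVec_snocOne_last ha hb rfl, h]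

theorem Sab_mem_BSet : Sab a b x ∈ BSet (a + b - 1) := by
  have htop := Tab_snocOne_last ha hb hx ▸ one_half_pos.trans_le (one_half_le_max_one_sub _)
  have hmono := Tuple.monotone_sort (subVec a b (snocOne a b x))
  refine ⟨fun i => ?_, fun i j hij => ?_, fun i => ?_⟩
  · rw [Sab_apply]
    exact div_nonneg (subVec_snocOne_nonneg ha hb hx _) htop.le
  · rw [Sab_apply, Sab_apply]
    exact div_le_div_of_nonneg_right (hmono (Fin.le_def.2 hij)) htop.le
  · rw [Sab_apply, div_le_one htop]
    exact hmono (Fin.mk_le_mk.2 (by omega))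

theorem sum_Sab : ∑ i, Sab a b x i =
    (∑ i, x i + 1 - b * pivot a b x) / max (pivot a b x) (1 - pivot a b x) - 1 := by
  have htop := (one_half_pos.trans_le (one_half_le_max_one_sub (pivot a b x))).ne'
  have hsum := sum_Tab (snocOne a b x) (by omega)
  rw [Fin.sum_univ_castSucc_of_eq (by omega : a + b - 1 + 1 = a + b),
    sum_snocOne (by omega)] at hsum
  have hpivot : snocOne a b x ⟨a - 1, by omega⟩ = pivot a b x := by
    simp [snocOne, pivot_eq ha hb, show a - 1 < a + b - 1 by omega]
  rw [hpivot, Tab_snocOne_last ha hb hx] at hsum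
  simp only [Sab_apply, Tab_snocOne_last ha hb hx, ← Finset.sum_div]
  rw [eq_sub_iff_add_eq, div_add_one htop, ← hsum]

end OnB

theorem pivot_mem_Icc (ha : 1 ≤ a) (hb : 1 ≤ b) (hx : x ∈ BSet (a + b - 1)) :
    pivot a b x ∈ Icc 0 1 := by
  rw [pivot_eq ha hb]
  exact ⟨hx.1 _, hx.2.2 _⟩

theorem sum_Sab_le (ha : 1 ≤ a) (hb : 1 ≤ b) (hx : x ∈ BSet (a + b - 1))
    (hsum : ∑ i, x i + 1 ≤ b) : ∑ i, Sab a b x i ≤ ∑ i, x i := by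
  obtain ⟨hs0, hs1⟩ := pivot_mem_Icc ha hb hx
  have hM := one_half_le_max_one_sub (pivot a b x)
  have hsum0 : 0 ≤ ∑ i, x i := Finset.sum_nonneg fun i _ => hx.1 i
  rw [sum_Sab ha hb hx, sub_le_iff_le_add, div_le_iff₀ (by linarith)]
  rcases max_cases (pivot a b x) (1 - pivot a b x) with ⟨h, -⟩ | ⟨h, -⟩ <;> rw [h] at hM ⊢ <;>
    nlinarith

theorem mapsTo_Sab_BSet (ha : 1 ≤ a) (hb : 1 ≤ b) :
    MapsTo (Sab a b) (BSet (a + b - 1)) (BSet (a + b - 1)) :=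
  fun _ hx => Sab_mem_BSet ha hb hx

theorem mapsTo_Sab_smallSumSet (ha : 1 ≤ a) (hb : 2 ≤ b) :
    MapsTo (Sab a b) (smallSumSet (a + b - 1)) (smallSumSet (a + b - 1)) := by
  intro x ⟨hx, hsum⟩
  have hb' : (2 : ℝ) ≤ b := by exact_mod_cast hb
  have hsum : ∑ i, x i ≤ 1 / 3 := hsum
  exact ⟨Sab_mem_BSet ha (by omega) hx,
    (sum_Sab_le ha (by omega) hx (by linarith)).trans hsum⟩

section Heavy

variable (ha : 1 ≤ a) (hb : 2 ≤ b) (hx : x ∈ heavyLastSet (a + b - 1))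
include ha hb hx

theorem pivot_le_lastCoord_sub : pivot a b x ≤ lastCoord x - 3 / 4 := by
  rw [pivot_eq ha (by omega)]
  exact le_lastCoord_sub_of_mem_heavyLastSet hx (by simp; omega)

theorem Tab_snocOne_penultimate :
    Tab a b (snocOne a b x) ⟨a + b - 2, by omega⟩ = lastCoord x - pivot a b x := by
  have hlast := lastCoord_le_one hx.1
  have hpivot := pivot_le_lastCoord_sub ha hb hx
  have hv₁ : subVec a b (snocOne a b x) ⟨a + b - 2, by omega⟩ = lastCoord x - pivot a b x := by
    rw [subVec_snocOne_of_le (by simp; omega) (by simp; omega),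
      lastCoord_eq ⟨a + b - 2, by omega⟩ (by simp; omega)]
  rw [← hv₁]
  refine Tuple.comp_sort_eq_of_penultimate (j₀ := ⟨a + b - 1, by omega⟩) (by simp; omega)
    (by simp; omega) ?_ fun j hj => ?_
  · rw [hv₁, subVec_snocOne_last ha (by omega) rfl]
    linarith
  have := j.isLt
  have hj' : (j : ℕ) ≠ a + b - 1 := fun h => hj (Fin.ext h)
  rw [hv₁]
  rcases lt_or_ge (j : ℕ) a with hja | hja
  · rw [subVec_snocOne_of_lt (by omega) hja]
    have : x ⟨j, by omega⟩ ≤ pivot a b x := by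
      rw [pivot_eq ha (by omega)]
      exact hx.1.2.1 (Fin.mk_le_mk.2 (by omega))
    linarith
  · rw [subVec_snocOne_of_le hja (by omega)]
    linarith [le_lastCoord hx.1 ⟨j, by omega⟩]

theorem Tab_snocOne_last_of_heavy :
    Tab a b (snocOne a b x) ⟨a + b - 1, by omega⟩ = 1 - pivot a b x := by
  rw [Tab_snocOne_last ha (by omega) hx.1, max_eq_right]
  linarith [pivot_le_lastCoord_sub ha hb hx, lastCoord_le_one hx.1]

theorem lastExcess_Sab : lastExcess (Sab a b x) =
    (lastExcess x - (b - 2) * pivot a b x) / (1 - pivot a b x) := by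
  have hpivot : pivot a b x ≤ 1 / 4 := by
    linarith [pivot_le_lastCoord_sub ha hb hx, lastCoord_le_one hx.1]
  have hlast : lastCoord (Sab a b x) = (lastCoord x - pivot a b x) / (1 - pivot a b x) := by
    rw [lastCoord_eq ⟨a + b - 2, by omega⟩ (by simp; omega), Sab_apply,
      Tab_snocOne_penultimate ha hb hx, Tab_snocOne_last_of_heavy ha hb hx]
  rw [lastExcess, lastExcess, hlast, sum_Sab ha (by omega) hx.1, max_eq_right (by linarith)]
  field_simp
  ring

end Heavy

theorem mapsTo_Sab_heavyLastSet (ha : 1 ≤ a) (hb : 3 ≤ b) :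
    MapsTo (Sab a b) (heavyLastSet (a + b - 1)) (heavyLastSet (a + b - 1)) := by
  intro x hx
  have hb' : (3 : ℝ) ≤ b := by exact_mod_cast hb
  have hU : lastExcess x ≤ 1 / 4 := hx.2
  obtain ⟨hs0, -⟩ := pivot_mem_Icc ha (by omega) hx.1
  have hs := pivot_le_lastCoord_sub ha (by omega) hx
  have hlast := lastCoord_le_one hx.1
  refine ⟨Sab_mem_BSet ha (by omega) hx.1, ?_⟩
  show lastExcess (Sab a b x) ≤ 1 / 4
  rw [lastExcess_Sab ha (by omega) hx, div_le_iff₀ (by linarith)]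
  nlinarith

end Dynamics

/-- for `a ≥ 1`, `b ≥ 3`, the map `S_{a,b}` is not ergodic with
respect to Lebesgue measure on `B`. -/
theorem statement4 (a b : ℕ) (ha : 1 ≤ a) (hb : 3 ≤ b) :
    ∃ E : Set (Fin (a + b - 1) → ℝ), MeasurableSet E ∧ E ⊆ BSet (a + b - 1) ∧
      volume (symmDiff (BSet (a + b - 1) ∩ Sab a b ⁻¹' E) E) = 0 ∧
      0 < volume E ∧ 0 < volume (BSet (a + b - 1) \ E) := by
  obtain ⟨E, hE, hEB, hinv, hAE, hCE⟩ := exists_invariant_of_mapsTo measurable_Sab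
    (measurableSet_BSet _) (measurableSet_smallSumSet _) inter_subset_left
    (mapsTo_Sab_BSet ha (by omega)) (mapsTo_Sab_smallSumSet ha (by omega))
    (mapsTo_Sab_heavyLastSet ha hb) (disjoint_smallSumSet_heavyLastSet _)
  refine ⟨E, hE, hEB, by simp [hinv], ?_, ?_⟩
  · exact (volume_smallSumSet_pos _).trans_le (measure_mono hAE)
  · exact (volume_heavyLastSet_pos (by omega)).trans_le
      (measure_mono (subset_sdiff.2 ⟨inter_subset_left, hCE⟩))
end

section
/- Define φ : Λ² → ℝ² by φ(x_1,x_2) = (x_1/(1+x_1+x_2), x_2/(1+x_1+x_2)). Then φ is a bijection from Λ² onto the set {y ∈ ℝ² : 0 ≤ y_1 ≤ y_2, y_1+y_2 < 1} (a subset of B of full Lebesgue measure in D = {y ∈ B : y_1+y_2 ≤ 1}), both φ and its inverse map Lebesgue-null sets to Lebesgue-null sets, and for Lebesgue-almost every x ∈ Λ² one has φ(T_{1,1}(x)) = S_{1,2}(φ(x)). -/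
open MeasureTheory Filter Topology

/-- The projected map `S_{1,2} : B → B`: with `y = T_{1,2}(x₁,x₂,1)`,
`S_{1,2}(x) = (y₁/y₃, y₂/y₃)`. -/
noncomputable def S12 (x : Fin 2 → ℝ) : Fin 2 → ℝ :=
  fun i => Tab 1 2 ![x 0, x 1, 1] ⟨i, by have := i.isLt; omega⟩ /
           Tab 1 2 ![x 0, x 1, 1] ⟨2, by omega⟩

/-- `φ(x₁,x₂) = (x₁/(1+x₁+x₂), x₂/(1+x₁+x₂))`. -/
noncomputable def phi (x : Fin 2 → ℝ) : Fin 2 → ℝ :=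
  ![x 0 / (1 + x 0 + x 1), x 1 / (1 + x 0 + x 1)]

/-- The image set `{y : 0 ≤ y₁ ≤ y₂, y₁ + y₂ < 1}`. -/
def W : Set (Fin 2 → ℝ) := {y | 0 ≤ y 0 ∧ y 0 ≤ y 1 ∧ y 0 + y 1 < 1}

/-- `D = {y ∈ B : y₁ + y₂ ≤ 1}`. -/
def D12 : Set (Fin 2 → ℝ) := {y | y ∈ BSet 2 ∧ y 0 + y 1 ≤ 1}

/-! `phi` is the map `x ↦ x / (1 + x₁ + x₂)`, inverted on `W` by `y ↦ y / (1 - y₁ - y₂)`; both are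
smooth where they are used, hence send null sets to null sets, and `D \ W` lies on the line
`y₁ + y₂ = 1`.

The conjugacy holds at every point of `Λ²`. Since `(φ(x), 1)` is a positive multiple of
`(x₁, x₂, 1 + x₁ + x₂)` and `T_{1,2}` commutes with positive scalings, `S_{1,2}(φ(x))` is
computed from `T_{1,2}(x₁, x₂, 1 + x₁ + x₂)`: the sorted pair `T_{1,1}(x)` followed by `1 + x₂`,
which dominates both entries. The entries of `T_{1,1}(x)` sum to `x₂`, so dividing by `1 + x₂` is exactly
applying `φ` to `T_{1,1}(x)`. -/

section TupleSort

variable {α : Type*} [LinearOrder α]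

lemma comp_sort_fin_two (f : Fin 2 → α) :
    f ∘ Tuple.sort f = ![min (f 0) (f 1), max (f 0) (f 1)] := by
  rcases le_total (f 0) (f 1) with h | h
  · rw [← Tuple.comp_sort_eq_comp_iff_monotone (σ := 1) |>.mpr ?_]
    · ext i; fin_cases i <;> simp [h]
    · simpa [Fin.monotone_iff_le_succ] using h
  · rw [← Tuple.comp_sort_eq_comp_iff_monotone (σ := Equiv.swap 0 1) |>.mpr ?_]
    · ext i; fin_cases i <;> simp [h]
    · simpa [Fin.monotone_iff_le_succ] using h

lemma comp_sort_fin_three_of_le (f : Fin 3 → α) (h₀ : f 0 ≤ f 2) (h₁ : f 1 ≤ f 2) :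
    f ∘ Tuple.sort f = ![min (f 0) (f 1), max (f 0) (f 1), f 2] := by
  rcases le_total (f 0) (f 1) with h | h
  · rw [← Tuple.comp_sort_eq_comp_iff_monotone (σ := 1) |>.mpr ?_]
    · ext i; fin_cases i <;> simp [h]
    · simp [Fin.monotone_iff_le_succ, Fin.forall_fin_two, h, h₁]
  · have hswap : Equiv.swap (0 : Fin 3) 1 2 = 2 := by decide
    rw [← Tuple.comp_sort_eq_comp_iff_monotone (σ := Equiv.swap 0 1) |>.mpr ?_]
    · ext i; fin_cases i <;> simp [h, hswap]
    · simp [Fin.monotone_iff_le_succ, Fin.forall_fin_two, h, h₀, hswap]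

end TupleSort

lemma subVec_one_one (x : Fin 2 → ℝ) : subVec 1 1 x = ![x 0, x 1 - x 0] := by
  ext j; fin_cases j <;> simp [subVec]

lemma subVec_one_two (v : Fin 3 → ℝ) : subVec 1 2 v = ![v 0, v 1 - v 0, v 2 - v 0] := by
  ext j; fin_cases j <;> simp [subVec]

lemma subVec_smul (a b : ℕ) (c : ℝ) (x : Fin (a + b) → ℝ) :
    subVec a b (c • x) = c • subVec a b x := by
  ext j; simp only [subVec, Pi.smul_apply, smul_eq_mul]; split_ifs <;> ring

lemma Tab_smul (a b : ℕ) {c : ℝ} (hc : 0 ≤ c) (x : Fin (a + b) → ℝ) :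
    Tab a b (c • x) = c • Tab a b x := by
  have hmono : Monotone ((c • subVec a b x) ∘ Tuple.sort (subVec a b x)) :=
    fun i j hij => mul_le_mul_of_nonneg_left (Tuple.monotone_sort (subVec a b x) hij) hc
  rw [Tab, subVec_smul, ← Tuple.comp_sort_eq_comp_iff_monotone.mpr hmono]
  rfl

lemma Tab_one_one (x : Fin 2 → ℝ) :
    Tab 1 1 x = ![min (x 0) (x 1 - x 0), max (x 0) (x 1 - x 0)] := by
  rw [Tab, comp_sort_fin_two, subVec_one_one]
  simp

lemma Tab_one_two_of_le (v : Fin 3 → ℝ) (h₀ : v 0 ≤ v 2 - v 0) (h₁ : v 1 - v 0 ≤ v 2 - v 0) :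
    Tab 1 2 v = ![min (v 0) (v 1 - v 0), max (v 0) (v 1 - v 0), v 2 - v 0] := by
  rw [Tab, subVec_one_two, comp_sort_fin_three_of_le] <;> simp <;> linarith

section CentralProjection

variable {𝕜 E : Type*} [Field 𝕜] [AddCommGroup E] [Module 𝕜 E] (ℓ : E →ₗ[𝕜] 𝕜)

lemma inv_one_sub_smul_inv_one_add_smul {x : E} (hx : 1 + ℓ x ≠ 0) :
    (1 - ℓ ((1 + ℓ x)⁻¹ • x))⁻¹ • (1 + ℓ x)⁻¹ • x = x := by
  have h : 1 - ℓ ((1 + ℓ x)⁻¹ • x) = (1 + ℓ x)⁻¹ := by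
    rw [map_smul, smul_eq_mul]
    field_simp
    ring
  rw [h, inv_inv, smul_smul, mul_inv_cancel₀ hx, one_smul]

lemma inv_one_add_smul_inv_one_sub_smul {y : E} (hy : 1 - ℓ y ≠ 0) :
    (1 + ℓ ((1 - ℓ y)⁻¹ • y))⁻¹ • (1 - ℓ y)⁻¹ • y = y := by
  have hy' : 1 + (-ℓ) y ≠ 0 := by simpa [sub_eq_add_neg] using hy
  simpa [sub_eq_add_neg] using inv_one_sub_smul_inv_one_add_smul (-ℓ) hy'

end CentralProjection

lemma addHaar_preimage_singleton_eq_zero {E : Type*} [NormedAddCommGroup E] [NormedSpace ℝ E]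
    [MeasurableSpace E] [BorelSpace E] [FiniteDimensional ℝ E] (μ : Measure E)
    [μ.IsAddHaarMeasure] {ℓ : E →ₗ[ℝ] ℝ} (hℓ : ℓ ≠ 0) (c : ℝ) : μ (ℓ ⁻¹' {c}) = 0 := by
  obtain ⟨x₀, rfl⟩ := LinearMap.surjective_of_ne_zero hℓ c
  have h : ℓ ⁻¹' {ℓ x₀} = (· + -x₀) ⁻¹' (LinearMap.ker ℓ : Set E) := by
    ext y; simp [add_neg_eq_zero]
  rw [h, measure_preimage_add_right]
  exact Measure.addHaar_submodule μ _ (by rwa [Ne, LinearMap.ker_eq_top])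

def coordSum : (Fin 2 → ℝ) →L[ℝ] ℝ := .proj 0 + .proj 1

@[simp]
lemma coordSum_apply (x : Fin 2 → ℝ) : coordSum x = x 0 + x 1 := rfl

lemma coordSum_ne_zero : coordSum.toLinearMap ≠ 0 := fun h => by
  simpa using LinearMap.congr_fun h ![1, 0]

lemma phi_eq_smul (x : Fin 2 → ℝ) : phi x = (1 + coordSum x)⁻¹ • x := by
  ext i; fin_cases i <;> simp [phi, div_eq_inv_mul, add_assoc]

noncomputable def phiInv (y : Fin 2 → ℝ) : Fin 2 → ℝ := (1 - coordSum y)⁻¹ • y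

lemma mem_Lambda_two {x : Fin 2 → ℝ} : x ∈ Lambda 2 ↔ 0 ≤ x 0 ∧ x 0 ≤ x 1 := by
  simp only [Lambda, Set.mem_ofPred_eq, Fin.forall_fin_two, Fin.monotone_iff_le_succ,
    Fin.forall_fin_one]
  exact ⟨fun h => ⟨h.1.1, h.2⟩, fun h => ⟨⟨h.1, h.1.trans h.2⟩, h.2⟩⟩

lemma mem_BSet {n : ℕ} {x : Fin n → ℝ} : x ∈ BSet n ↔ x ∈ Lambda n ∧ ∀ i, x i ≤ 1 :=
  and_assoc.symm

lemma one_add_coordSum_pos {x : Fin 2 → ℝ} (hx : x ∈ Lambda 2) : 0 < 1 + coordSum x := by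
  obtain ⟨h₀, h₀₁⟩ := mem_Lambda_two.1 hx
  simp only [coordSum_apply]
  linarith

lemma one_sub_coordSum_pos {y : Fin 2 → ℝ} (hy : y ∈ W) : 0 < 1 - coordSum y := by
  simp only [coordSum_apply]
  linarith [hy.2.2]

lemma phi_mapsTo : Set.MapsTo phi (Lambda 2) W := by
  intro x hx
  obtain ⟨h₀, h₀₁⟩ := mem_Lambda_two.1 hx
  have hs : 0 < 1 + x 0 + x 1 := by linarith
  refine ⟨by simp only [phi, Matrix.cons_val_zero]; positivity, ?_, ?_⟩
  · simpa [phi] using div_le_div_of_nonneg_right h₀₁ hs.le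
  · simp only [phi, Matrix.cons_val_zero, Matrix.cons_val_one, ← add_div, div_lt_one hs]
    linarith

lemma phiInv_mapsTo : Set.MapsTo phiInv W (Lambda 2) := by
  intro y hy
  have hc := inv_pos.2 (one_sub_coordSum_pos hy)
  obtain ⟨h₀, h₀₁, -⟩ := hy
  rw [mem_Lambda_two]
  simp only [phiInv, Pi.smul_apply, smul_eq_mul]
  exact ⟨by positivity, mul_le_mul_of_nonneg_left h₀₁ hc.le⟩

lemma phi_invOn : Set.InvOn phiInv phi (Lambda 2) W := by
  constructor
  · intro x hx
    rw [phiInv, phi_eq_smul]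
    exact inv_one_sub_smul_inv_one_add_smul coordSum.toLinearMap
      (one_add_coordSum_pos hx).ne'
  · intro y hy
    rw [phiInv, phi_eq_smul]
    exact inv_one_add_smul_inv_one_sub_smul coordSum.toLinearMap
      (one_sub_coordSum_pos hy).ne'

lemma phi_differentiableOn : DifferentiableOn ℝ phi (Lambda 2) := by
  rw [show phi = fun x => (1 + coordSum x)⁻¹ • x from funext phi_eq_smul]
  exact ((coordSum.differentiable.differentiableOn.const_add 1).inv
    fun _ hx => (one_add_coordSum_pos hx).ne').smul differentiableOn_id

lemma phiInv_differentiableOn : DifferentiableOn ℝ phiInv W :=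
  ((coordSum.differentiable.differentiableOn.const_sub 1).inv
    fun _ hy => (one_sub_coordSum_pos hy).ne').smul differentiableOn_id

lemma phi_Tab_one_one {x : Fin 2 → ℝ} (hx : x ∈ Lambda 2) :
    phi (Tab 1 1 x) = S12 (phi x) := by
  obtain ⟨h₀, h₀₁⟩ := mem_Lambda_two.1 hx
  set c := (1 + coordSum x)⁻¹
  have hs : 0 < 1 + (x 0 + x 1) := one_add_coordSum_pos hx
  have hc : 0 < c := inv_pos.2 hs
  have hv : ![phi x 0, phi x 1, 1] = c • ![x 0, x 1, 1 + x 0 + x 1] := by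
    ext i; fin_cases i <;> simp [phi_eq_smul, c, add_assoc, hs.ne']
  have hT : Tab 1 2 ![x 0, x 1, 1 + x 0 + x 1] =
      ![min (x 0) (x 1 - x 0), max (x 0) (x 1 - x 0), 1 + x 1] := by
    rw [Tab_one_two_of_le] <;> simp <;> linarith
  have hsum : 1 + min (x 0) (x 1 - x 0) + max (x 0) (x 1 - x 0) = 1 + x 1 := by
    rw [add_assoc, min_add_max]; ring
  rw [Tab_one_one]
  ext i; fin_cases i <;> simp only [S12, hv, Tab_smul 1 2 hc.le, hT]
    <;> simp [phi, hsum, mul_div_mul_left _ _ hc.ne']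

lemma W_subset_BSet : W ⊆ BSet 2 := by
  rintro y ⟨h₀, h₀₁, h₁⟩
  rw [mem_BSet, mem_Lambda_two, Fin.forall_fin_two]
  exact ⟨⟨h₀, h₀₁⟩, by linarith, by linarith⟩

lemma D12_diff_W_subset : D12 \ W ⊆ coordSum ⁻¹' {1} := by
  rintro y ⟨⟨hy, h₁⟩, hyW⟩
  obtain ⟨h₀, h₀₁⟩ := mem_Lambda_two.1 (mem_BSet.1 hy).1
  have : ¬ y 0 + y 1 < 1 := fun h => hyW ⟨h₀, h₀₁, h⟩
  simp only [Set.mem_preimage, Set.mem_singleton_iff, coordSum_apply]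
  linarith

lemma Lambda_inter_preimage_phi {N : Set (Fin 2 → ℝ)} (hN : N ⊆ W) :
    Lambda 2 ∩ phi ⁻¹' N = phiInv '' N := by
  have h := phi_invOn.2.image_inter' (s₁ := N)
  rw [Set.inter_eq_left.2 hN, (phi_invOn.symm.bijOn phiInv_mapsTo phi_mapsTo).image_eq] at h
  rw [h, Set.inter_comm]

/-- `φ` is a bijection from `Λ²` onto `W` (a subset of `B` of full
Lebesgue measure in `D`), `φ` and `φ⁻¹` send null sets to null sets, and
`φ ∘ T_{1,1} = S_{1,2} ∘ φ` almost everywhere on `Λ²`. -/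
theorem statement8 :
    Set.BijOn phi (Lambda 2) W ∧
    W ⊆ BSet 2 ∧ volume (D12 \ W) = 0 ∧
    (∀ N ⊆ Lambda 2, volume N = 0 → volume (phi '' N) = 0) ∧
    (∀ N ⊆ W, volume N = 0 → volume (Lambda 2 ∩ phi ⁻¹' N) = 0) ∧
    (∀ᵐ x : Fin 2 → ℝ, x ∈ Lambda 2 → phi (Tab 1 1 x) = S12 (phi x)) := by
  refine ⟨phi_invOn.bijOn phi_mapsTo phiInv_mapsTo, W_subset_BSet, ?_, ?_, ?_, ?_⟩
  · exact measure_mono_null D12_diff_W_subset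
      (addHaar_preimage_singleton_eq_zero volume coordSum_ne_zero 1)
  · exact fun N hN hN₀ => addHaar_image_eq_zero_of_differentiableOn_of_addHaar_eq_zero volume
      (phi_differentiableOn.mono hN) hN₀
  · intro N hN hN₀
    rw [Lambda_inter_preimage_phi hN]
    exact addHaar_image_eq_zero_of_differentiableOn_of_addHaar_eq_zero volume
      (phiInv_differentiableOn.mono hN) hN₀
  · exact .of_forall fun _ => phi_Tab_one_one
end

section
/- Let a ≥ 1 and b ≥ 2 be integers. For Lebesgue-almost every x ∈ D: (T_{a,b}^k(x))_i → 0 as k → ∞ for every 1 ≤ i ≤ a+1, and for every j with a+2 ≤ j ≤ a+b the limit lim_{k→∞} (T_{a,b}^k(x))_j equals x_j − (x_1+…+x_{a+1}) and is strictly positive. -/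
/-!
Write `S(x) = x₁ + ⋯ + x_{a+1}` (`headSum (a + 1)`; Lean coordinates are `0`-based, so the pivot
`x_a` is `x ⟨a - 1, _⟩`). For `x ∈ D` the first `a + 1` entries of
`(x₁, …, x_a, x_{a+1} - x_a, …)` sum to `S(x) - x_a ≤ x_{a+2} - x_a`, so sorting only permutes
them: `T` subtracts `x_a` from every tail coordinate, lowers `S` by `x_a`, and maps `D` to itself.
Hence `S` decreases along the orbit to some `L ≥ 0` and the pivots tend to `0`. If `L > 0`, then
eventually `(a + 2) x_a ≤ S(x)`, which forces `2 x_a ≤ x_{a+1}`; then the subtracted vector is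
already sorted, so the pivot never changes again and must be `0`. This is excluded almost surely:
on each of the finitely many cells where the sorting permutation is fixed, `T` is a linear
isomorphism, so preimages of null sets such as `{x_a = 0}` are null. Thus `S → 0`, which gives
the limits; strict positivity holds off the hyperplane `x_{a+2} = S(x)`.
-/

open MeasureTheory Filter Topology

namespace MeasureTheory.Measure

variable {E : Type*} [NormedAddCommGroup E] [NormedSpace ℝ E] [MeasurableSpace E] [BorelSpace E]
  [FiniteDimensional ℝ E] (μ : Measure E) [μ.IsAddHaarMeasure]

theorem addHaar_setOf_eq_zero {ℓ : E →ₗ[ℝ] ℝ} (hℓ : ℓ ≠ 0) : μ {x | ℓ x = 0} = 0 :=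
  addHaar_submodule μ (LinearMap.ker ℓ) fun h => hℓ (LinearMap.ker_eq_top.1 h)

theorem addHaar_preimage_null_of_forall_eq_linearEquiv {ι : Type*} [Countable ι]
    (L : ι → E ≃ₗ[ℝ] E) {f : E → E} (hf : ∀ x, ∃ i, f x = L i x) {s : Set E} (hs : μ s = 0) :
    μ (f ⁻¹' s) = 0 := by
  have hcover : f ⁻¹' s ⊆ ⋃ i, L i ⁻¹' s := fun x hx =>
    let ⟨i, hi⟩ := hf x
    Set.mem_iUnion.2 ⟨i, show L i x ∈ s from hi ▸ hx⟩
  refine measure_mono_null hcover (measure_iUnion_null fun i => ?_)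
  rw [addHaar_preimage_linearEquiv, hs, mul_zero]

end MeasureTheory.Measure

theorem MeasureTheory.measure_preimage_iterate_null {α : Type*} [MeasurableSpace α]
    {μ : Measure α} {f : α → α} (hf : ∀ s, μ s = 0 → μ (f ⁻¹' s) = 0) {s : Set α}
    (hs : μ s = 0) (k : ℕ) : μ (f^[k] ⁻¹' s) = 0 := by
  induction k with
  | zero => exact hs
  | succ k ih => rw [Function.iterate_succ, Set.preimage_comp]; exact hf _ ih

namespace Tuple

theorem exists_perm_comp_sort_eq_of_le_of_monotoneOn {α : Type*} [LinearOrder α] {m n : ℕ}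
    (h : m ≤ n) (v : Fin n → α) (hle : ∀ i j : Fin n, (i : ℕ) < m → m ≤ (j : ℕ) → v i ≤ v j)
    (hmono : ∀ i j : Fin n, m ≤ (i : ℕ) → i ≤ j → v i ≤ v j) :
    ∃ τ : Equiv.Perm (Fin m),
      (∀ i, (v ∘ sort v) (Fin.castLE h i) = v (Fin.castLE h (τ i))) ∧
      ∀ j : Fin n, m ≤ (j : ℕ) → (v ∘ sort v) j = v j := by
  set τ := sort (v ∘ Fin.castLE h)
  set σ : Equiv.Perm (Fin n) := τ.extendDomain (Fin.castLEquiv h)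
  have hσ_head (i : Fin m) : σ (Fin.castLE h i) = Fin.castLE h (τ i) :=
    τ.extendDomain_apply_image (Fin.castLEquiv h) i
  have hσ_tail (j : Fin n) (hj : m ≤ (j : ℕ)) : σ j = j :=
    τ.extendDomain_apply_not_subtype _ (by omega)
  have hsorted : Monotone (v ∘ σ) := by
    intro i j hij
    by_cases hj : (j : ℕ) < m
    · have hi : (i : ℕ) < m := lt_of_le_of_lt hij hj
      show v (σ (Fin.castLE h ⟨i, hi⟩)) ≤ v (σ (Fin.castLE h ⟨j, hj⟩))
      rw [hσ_head, hσ_head]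
      exact monotone_sort (v ∘ Fin.castLE h) (show (⟨i, hi⟩ : Fin m) ≤ ⟨j, hj⟩ from hij)
    · rw [Function.comp_apply, Function.comp_apply, hσ_tail j (by omega)]
      by_cases hi : (i : ℕ) < m
      · rw [show i = Fin.castLE h ⟨i, hi⟩ from rfl, hσ_head]
        exact hle _ _ (τ _).isLt (by omega)
      · rw [hσ_tail i (by omega)]
        exact hmono i j (by omega) hij
  have hsort : v ∘ sort v = v ∘ σ := (comp_sort_eq_comp_iff_monotone.2 hsorted).symm
  refine ⟨τ, fun i => ?_, fun j hj => ?_⟩ <;> rw [hsort, Function.comp_apply]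
  · rw [hσ_head]
  · rw [hσ_tail j hj]

end Tuple

theorem Real.tendsto_zero_of_succ_eq_sub_of_stalls {s m : ℕ → ℝ} (c : ℝ) (hs : ∀ k, 0 ≤ s k)
    (hm : ∀ k, 0 ≤ m k) (hsucc : ∀ k, s (k + 1) = s k - m k)
    (hstall : ∀ k, c * m k ≤ s k → m (k + 1) = m k) (hne : ∀ k, m k ≠ 0) :
    Tendsto s atTop (𝓝 0) := by
  have hanti : Antitone s := antitone_nat_of_succ_le fun k => by linarith [hsucc k, hm k]
  obtain ⟨L, hL⟩ : ∃ L, Tendsto s atTop (𝓝 L) :=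
    ⟨_, tendsto_atTop_ciInf hanti ⟨0, by rintro _ ⟨k, rfl⟩; exact hs k⟩⟩
  have hm_tendsto : Tendsto m atTop (𝓝 0) := by
    have := hL.sub (hL.comp (tendsto_add_atTop_nat 1))
    rw [sub_self] at this
    exact this.congr fun k => by simp [hsucc k]
  obtain rfl | hLpos := (ge_of_tendsto' hL hs).eq_or_lt
  · exact hL
  -- once `c * m k < L ≤ s k`, the decrement `m` can no longer change, yet it tends to `0`
  obtain ⟨K, hK⟩ := eventually_atTop.1
    ((mul_zero c ▸ hm_tendsto.const_mul c).eventually_lt_const hLpos)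
  have hconst : ∀ k, K ≤ k → m k = m K := fun k hk => by
    induction k, hk using Nat.le_induction with
    | base => rfl
    | succ k hk ih => rw [hstall k ((hK k hk).le.trans (hanti.le_of_tendsto hL k)), ih]
  exact absurd (tendsto_nhds_unique (tendsto_const_nhds.congr'
    (eventually_atTop.2 ⟨K, fun k hk => (hconst k hk).symm⟩)) hm_tendsto) (hne K)

theorem apply_le_apply_of_mem_Lambda {n : ℕ} {x : Fin n → ℝ} (hx : x ∈ Lambda n)
    {i j : Fin n} (hij : (i : ℕ) ≤ j) : x i ≤ x j :=
  hx.2 hij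

def headSum {n : ℕ} (m : ℕ) (h : m ≤ n) (x : Fin n → ℝ) : ℝ :=
  ∑ i : Fin m, x (Fin.castLE h i)

theorem apply_castLE_le_headSum {n m : ℕ} (h : m ≤ n) {x : Fin n → ℝ} (hx : ∀ j, 0 ≤ x j)
    (i : Fin m) : x (Fin.castLE h i) ≤ headSum m h x :=
  Finset.single_le_sum (fun _ _ => hx _) (Finset.mem_univ i)

theorem headSum_nonneg {n m : ℕ} (h : m ≤ n) {x : Fin n → ℝ} (hx : ∀ j, 0 ≤ x j) :
    0 ≤ headSum m h x :=
  Finset.sum_nonneg fun _ _ => hx _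

theorem volume_setOf_apply_eq_zero {n : ℕ} (i : Fin n) :
    volume {x : Fin n → ℝ | x i = 0} = 0 :=
  Measure.addHaar_setOf_eq_zero volume (ℓ := LinearMap.proj (φ := fun _ : Fin n => ℝ) i)
    fun h => by simpa using LinearMap.congr_fun h (fun _ => 1)

theorem ae_headSum_ne {n m : ℕ} (h : m < n) :
    ∀ᵐ x : Fin n → ℝ, headSum m h.le x ≠ x ⟨m, h⟩ := by
  set ℓ : (Fin n → ℝ) →ₗ[ℝ] ℝ :=
    LinearMap.proj ⟨m, h⟩ - ∑ i : Fin m, LinearMap.proj (Fin.castLE h.le i)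
  have hℓ (x : Fin n → ℝ) : ℓ x = x ⟨m, h⟩ - headSum m h.le x := by simp [ℓ, headSum]
  have hℓ0 : ℓ ≠ 0 := fun h0 => by
    have hsingle : headSum m h.le (Pi.single ⟨m, h⟩ (1 : ℝ)) = 0 :=
      Finset.sum_eq_zero fun i _ => Pi.single_eq_of_ne (Fin.ne_of_val_ne (Nat.ne_of_lt i.isLt)) _
    have := LinearMap.congr_fun h0 (Pi.single ⟨m, h⟩ 1)
    rw [hℓ, hsingle, Pi.single_eq_same] at this
    norm_num at this
  refine ae_iff.2 (measure_mono_null (fun x (hx : ¬headSum m h.le x ≠ x ⟨m, h⟩) =>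
    show ℓ x = 0 from ?_) (Measure.addHaar_setOf_eq_zero volume hℓ0))
  rw [hℓ, not_not.1 hx, sub_self]

section Dynamics

variable {a b : ℕ}

theorem subVec_of_lt (x : Fin (a + b) → ℝ) {j : Fin (a + b)} (hj : (j : ℕ) < a) :
    subVec a b x j = x j :=
  if_pos hj

theorem subVec_of_le (x : Fin (a + b) → ℝ) {j : Fin (a + b)} (hj : a ≤ (j : ℕ)) :
    subVec a b x j = x j - x ⟨a - 1, by have := j.isLt; omega⟩ :=
  if_neg (by omega)

noncomputable def subVecLinear (a b : ℕ) : (Fin (a + b) → ℝ) →ₗ[ℝ] (Fin (a + b) → ℝ) where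
  toFun := subVec a b
  map_add' x y := by
    ext j
    simp only [subVec, Pi.add_apply]
    split_ifs <;> ring
  map_smul' c x := by
    ext j
    simp only [subVec, Pi.smul_apply, smul_eq_mul, RingHom.id_apply]
    split_ifs <;> ring

theorem subVec_injective (ha : 1 ≤ a) : Function.Injective (subVec a b) := by
  intro x y hxy
  have hpivot : x ⟨a - 1, by omega⟩ = y ⟨a - 1, by omega⟩ := by
    have hlt : ((⟨a - 1, by omega⟩ : Fin (a + b)) : ℕ) < a := by change a - 1 < a; omega
    simpa only [subVec_of_lt _ hlt] using congrFun hxy ⟨a - 1, by omega⟩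
  funext j
  have hj := congrFun hxy j
  by_cases hja : (j : ℕ) < a
  · rwa [subVec_of_lt _ hja, subVec_of_lt _ hja] at hj
  · rw [subVec_of_le _ (not_lt.1 hja), subVec_of_le _ (not_lt.1 hja), hpivot] at hj
    linarith

theorem measure_preimage_Tab_null (ha : 1 ≤ a) {s : Set (Fin (a + b) → ℝ)} (hs : volume s = 0) :
    volume (Tab a b ⁻¹' s) = 0 :=
  Measure.addHaar_preimage_null_of_forall_eq_linearEquiv volume
    (fun σ : Equiv.Perm (Fin (a + b)) =>
      (LinearEquiv.ofInjectiveEndo (subVecLinear a b) (subVec_injective ha)).trans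
        (LinearEquiv.funCongrLeft ℝ ℝ σ))
    (fun x => ⟨Tuple.sort (subVec a b x), rfl⟩) hs

theorem subVec_nonneg {x : Fin (a + b) → ℝ} (hx : x ∈ Lambda (a + b)) (j : Fin (a + b)) :
    0 ≤ subVec a b x j := by
  by_cases hja : (j : ℕ) < a
  · rw [subVec_of_lt x hja]
    exact hx.1 j
  · rw [subVec_of_le x (not_lt.1 hja), sub_nonneg]
    exact apply_le_apply_of_mem_Lambda hx (by simp only; omega)

theorem Tab_mem_Lambda {x : Fin (a + b) → ℝ} (hx : x ∈ Lambda (a + b)) :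
    Tab a b x ∈ Lambda (a + b) :=
  ⟨fun _ => subVec_nonneg hx _, Tuple.monotone_sort _⟩

theorem headSum_subVec (h : a + 1 ≤ a + b) (x : Fin (a + b) → ℝ) :
    headSum (a + 1) h (subVec a b x) = headSum (a + 1) h x - x ⟨a - 1, by omega⟩ := by
  simp only [headSum, Fin.sum_univ_castSucc]
  rw [subVec_of_le x (by simp), Finset.sum_congr rfl fun i _ => subVec_of_lt x (by simp)]
  ring

theorem Tab_of_headSum_le (h : a + 1 < a + b) {x : Fin (a + b) → ℝ}
    (hx : x ∈ Lambda (a + b)) (hD : headSum (a + 1) h.le x ≤ x ⟨a + 1, h⟩) :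
    (∀ j : Fin (a + b), a + 1 ≤ (j : ℕ) → Tab a b x j = x j - x ⟨a - 1, by omega⟩) ∧
      headSum (a + 1) h.le (Tab a b x) =
        headSum (a + 1) h.le x - x ⟨a - 1, by omega⟩ := by
  set v := subVec a b x
  have hv_head (i : Fin (a + 1)) :
      v (Fin.castLE h.le i) ≤ headSum (a + 1) h.le x - x ⟨a - 1, by omega⟩ :=
    headSum_subVec h.le x ▸ apply_castLE_le_headSum h.le (subVec_nonneg hx) i
  have hv_tail (j : Fin (a + b)) (hj : a + 1 ≤ (j : ℕ)) : v j = x j - x ⟨a - 1, by omega⟩ :=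
    subVec_of_le x (by omega)
  have hhead_le_tail (i j : Fin (a + b)) (hi : (i : ℕ) < a + 1) (hj : a + 1 ≤ (j : ℕ)) :
      v i ≤ v j := by
    have hvi : v i ≤ headSum (a + 1) h.le x - x ⟨a - 1, by omega⟩ := hv_head ⟨i, hi⟩
    have hxj : x ⟨a + 1, h⟩ ≤ x j := apply_le_apply_of_mem_Lambda hx hj
    rw [hv_tail j hj]
    linarith
  have htail_mono (i j : Fin (a + b)) (hi : a + 1 ≤ (i : ℕ)) (hij : i ≤ j) : v i ≤ v j := by
    rw [hv_tail i hi, hv_tail j (hi.trans hij)]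
    linarith [hx.2 hij]
  obtain ⟨τ, hhead, htail⟩ :=
    Tuple.exists_perm_comp_sort_eq_of_le_of_monotoneOn h.le v hhead_le_tail htail_mono
  refine ⟨fun j hj => (htail j hj).trans (hv_tail j hj), ?_⟩
  calc headSum (a + 1) h.le (Tab a b x) = ∑ i, v (Fin.castLE h.le (τ i)) :=
        Finset.sum_congr rfl fun i _ => hhead i
    _ = headSum (a + 1) h.le v := Equiv.sum_comp τ (fun i => v (Fin.castLE h.le i))
    _ = _ := headSum_subVec h.le x

theorem iterate_Tab_of_headSum_le (h : a + 1 < a + b) {x : Fin (a + b) → ℝ}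
    (hx : x ∈ Lambda (a + b)) (hD : headSum (a + 1) h.le x ≤ x ⟨a + 1, h⟩)
    (k : ℕ) :
    (Tab a b)^[k] x ∈ Lambda (a + b) ∧
      headSum (a + 1) h.le ((Tab a b)^[k] x) ≤ (Tab a b)^[k] x ⟨a + 1, h⟩ ∧
      ∀ j : Fin (a + b), a + 1 ≤ (j : ℕ) →
        (Tab a b)^[k] x j =
          x j - headSum (a + 1) h.le x + headSum (a + 1) h.le ((Tab a b)^[k] x) := by
  induction k with
  | zero => exact ⟨hx, hD, fun j _ => by simp⟩
  | succ k ih =>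
    obtain ⟨hΛ, hD', hk⟩ := ih
    obtain ⟨htail, hsum⟩ := Tab_of_headSum_le h hΛ hD'
    rw [Function.iterate_succ_apply']
    refine ⟨Tab_mem_Lambda hΛ, ?_, fun j hj => ?_⟩
    · rw [hsum, htail _ le_rfl]
      linarith
    · rw [htail j hj, hsum, hk j hj]
      ring

theorem Tab_eq_subVec_of_two_mul_le (hb : 1 ≤ b) {x : Fin (a + b) → ℝ} (hx : x ∈ Lambda (a + b))
    (h2 : 2 * x ⟨a - 1, by omega⟩ ≤ x ⟨a, by omega⟩) : Tab a b x = subVec a b x := by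
  have hmono : Monotone (subVec a b x) := by
    intro i j hij
    have hij' : (i : ℕ) ≤ j := hij
    by_cases hj : (j : ℕ) < a
    · rw [subVec_of_lt x hj, subVec_of_lt x (hij'.trans_lt hj)]
      exact hx.2 hij
    rw [subVec_of_le x (not_lt.1 hj)]
    by_cases hi : (i : ℕ) < a
    · have hxi : x i ≤ x ⟨a - 1, by omega⟩ :=
        apply_le_apply_of_mem_Lambda hx (show (i : ℕ) ≤ a - 1 by omega)
      have hxj : x ⟨a, by omega⟩ ≤ x j := apply_le_apply_of_mem_Lambda hx (not_lt.1 hj)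
      rw [subVec_of_lt x hi]
      linarith
    · rw [subVec_of_le x (not_lt.1 hi)]
      linarith [hx.2 hij]
  change subVec a b x ∘ Tuple.sort (subVec a b x) = subVec a b x
  rw [Tuple.sort_eq_refl_iff_monotone.2 hmono]
  rfl

theorem two_mul_le_of_mul_le_headSum (h : a + 1 ≤ a + b) {y : Fin (a + b) → ℝ}
    (hy : y ∈ Lambda (a + b)) (hle : (a + 2) * y ⟨a - 1, by omega⟩ ≤ headSum (a + 1) h y) :
    2 * y ⟨a - 1, by omega⟩ ≤ y ⟨a, by omega⟩ := by
  have hfirst : ∑ i : Fin a, y (Fin.castLE h i.castSucc) ≤ a * y ⟨a - 1, by omega⟩ := by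
    calc ∑ i : Fin a, y (Fin.castLE h i.castSucc) ≤ ∑ _i : Fin a, y ⟨a - 1, by omega⟩ :=
          Finset.sum_le_sum fun i _ =>
            apply_le_apply_of_mem_Lambda hy (show (i : ℕ) ≤ a - 1 by omega)
      _ = a * y ⟨a - 1, by omega⟩ := by simp
  have hsplit : headSum (a + 1) h y =
      ∑ i : Fin a, y (Fin.castLE h i.castSucc) + y ⟨a, by omega⟩ :=
    Fin.sum_univ_castSucc _
  linarith

theorem tendsto_headSum_iterate_Tab (ha : 1 ≤ a) (h : a + 1 < a + b) {x : Fin (a + b) → ℝ}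
    (hx : x ∈ Lambda (a + b)) (hD : headSum (a + 1) h.le x ≤ x ⟨a + 1, h⟩)
    (hne : ∀ k, (Tab a b)^[k] x ⟨a - 1, by omega⟩ ≠ 0) :
    Tendsto (fun k => headSum (a + 1) h.le ((Tab a b)^[k] x)) atTop (𝓝 0) := by
  have horbit := iterate_Tab_of_headSum_le h hx hD
  refine Real.tendsto_zero_of_succ_eq_sub_of_stalls (a + 2)
    (fun k => headSum_nonneg _ (horbit k).1.1) (fun k => (horbit k).1.1 _)
    (fun k => ?_) (fun k hk => ?_) hne
  · rw [Function.iterate_succ_apply']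
    exact (Tab_of_headSum_le h (horbit k).1 (horbit k).2.1).2
  · rw [Function.iterate_succ_apply',
      Tab_eq_subVec_of_two_mul_le (by omega) (horbit k).1 (two_mul_le_of_mul_le_headSum _ (horbit k).1 hk),
      subVec_of_lt _ (j := ⟨a - 1, by omega⟩) (show a - 1 < a by omega)]

theorem tendsto_iterate_Tab (ha : 1 ≤ a) (h : a + 1 < a + b) {x : Fin (a + b) → ℝ}
    (hx : x ∈ Lambda (a + b)) (hD : headSum (a + 1) h.le x ≤ x ⟨a + 1, h⟩)
    (hS : headSum (a + 1) h.le x ≠ x ⟨a + 1, h⟩)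
    (hne : ∀ k, (Tab a b)^[k] x ⟨a - 1, by omega⟩ ≠ 0) :
    (∀ i : Fin (a + b), (i : ℕ) < a + 1 → Tendsto (fun k => (Tab a b)^[k] x i) atTop (𝓝 0)) ∧
      ∀ j : Fin (a + b), a + 1 ≤ (j : ℕ) →
        0 < x j - headSum (a + 1) h.le x ∧
        Tendsto (fun k => (Tab a b)^[k] x j) atTop (𝓝 (x j - headSum (a + 1) h.le x)) := by
  have horbit := iterate_Tab_of_headSum_le h hx hD
  have hsum := tendsto_headSum_iterate_Tab ha h hx hD hne
  refine ⟨fun i hi => ?_, fun j hj => ⟨?_, ?_⟩⟩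
  · exact squeeze_zero (fun k => (horbit k).1.1 i)
      (fun k => apply_castLE_le_headSum _ (horbit k).1.1 ⟨i, hi⟩) hsum
  · linarith [lt_of_le_of_ne hD hS, apply_le_apply_of_mem_Lambda hx (i := ⟨a + 1, h⟩) hj]
  · have hlim := (tendsto_const_nhds (x := x j - headSum (a + 1) h.le x)).add hsum
    rw [add_zero] at hlim
    exact hlim.congr fun k => ((horbit k).2.2 j hj).symm

end Dynamics

/-- for `a ≥ 1`, `b ≥ 2`, for a.e. `x` in
`D = {x ∈ Λ^{a+b} : x₁+…+x_{a+1} ≤ x_{a+2}}`, the first `a+1` coordinates of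
the iterates tend to `0`, and for `a+2 ≤ j ≤ a+b` the `j`-th coordinate tends
to `x_j − (x₁+…+x_{a+1}) > 0`. -/
theorem statement14 (a b : ℕ) (ha : 1 ≤ a) (hb : 2 ≤ b) :
    ∀ᵐ x : Fin (a + b) → ℝ,
      (x ∈ Lambda (a + b) ∧
        ∑ i : Fin (a + 1), x ⟨i, by have := i.isLt; omega⟩ ≤ x ⟨a + 1, by omega⟩) →
      (∀ i : Fin (a + b), (i : ℕ) < a + 1 →
        Tendsto (fun k => (Tab a b)^[k] x i) atTop (𝓝 0)) ∧
      (∀ j : Fin (a + b), a + 1 ≤ (j : ℕ) →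
        0 < x j - ∑ i : Fin (a + 1), x ⟨i, by have := i.isLt; omega⟩ ∧
        Tendsto (fun k => (Tab a b)^[k] x j) atTop
          (𝓝 (x j - ∑ i : Fin (a + 1), x ⟨i, by have := i.isLt; omega⟩))) := by
  have hpivot : ∀ᵐ x : Fin (a + b) → ℝ, ∀ k, (Tab a b)^[k] x ⟨a - 1, by omega⟩ ≠ 0 :=
    ae_all_iff.2 fun k => ae_iff.2 <| by
      simpa only [not_not, Set.preimage_ofPred_eq] using measure_preimage_iterate_null
        (fun _ => measure_preimage_Tab_null ha) (volume_setOf_apply_eq_zero _) k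
  filter_upwards [ae_headSum_ne (show a + 1 < a + b by omega), hpivot] with x hS hne hD
  exact tendsto_iterate_Tab ha (by omega) hD.1 hD.2 hS hne
end

section
/- Let a ≥ 1 and b ≥ 2 be integers, and define Θ = {x ∈ Λ^{a+b} : σ(x) > b·x_{a+b} and 2·x_a ≥ x_{a+b}}. For Lebesgue-almost every x ∈ Λ^{a+b} with σ(x) > b·x_{a+b}, there exists an integer k ≥ 0 such that T_{a,b}^k(x) ∈ Θ. -/
open MeasureTheory Filter Topology

/-! If the orbit of `x` never enters `Θ`, then at every step `2 x_a < x_{a+b}`, so the largest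
coordinate of `T x` is `x_{a+b} - x_a`, while `σ(T x) = σ(x) - b x_a`. Hence the excess
`δ = σ(x) - b x_{a+b} > 0` is invariant along the orbit, and since `σ ≤ a x_a + b x_{a+b}` gives
`δ ≤ a x_a`, the largest coordinate drops by at least `δ / a` at each step. It stays nonnegative,
so this cannot go on forever. -/

open Finset

lemma comp_sort_mem_Lambda {n : ℕ} {f : Fin n → ℝ} (hf : ∀ i, 0 ≤ f i) :
    f ∘ Tuple.sort f ∈ Lambda n :=
  ⟨fun _ => hf _, Tuple.monotone_sort f⟩

lemma comp_sort_eq_of_forall_le {n : ℕ} {α : Type*} [LinearOrder α] {f : Fin n → α}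
    {j k : Fin n} (hj : ∀ i, f i ≤ f j) (hk : ∀ i, i ≤ k) : (f ∘ Tuple.sort f) k = f j := by
  refine le_antisymm (hj _) ?_
  calc f j = (f ∘ Tuple.sort f) ((Tuple.sort f).symm j) := by simp
    _ ≤ (f ∘ Tuple.sort f) k := Tuple.monotone_sort f (hk _)

namespace Tab

variable {a b : ℕ} {y : Fin (a + b) → ℝ}

lemma subVec_nonneg (hy : y ∈ Lambda (a + b)) (j : Fin (a + b)) : 0 ≤ subVec a b y j := by
  unfold subVec
  split_ifs with hj
  · exact hy.1 j
  · exact sub_nonneg.2 (hy.2 (Fin.le_def.2 (by simp; omega)))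

lemma mem_Lambda (hy : y ∈ Lambda (a + b)) : Tab a b y ∈ Lambda (a + b) :=
  comp_sort_mem_Lambda (subVec_nonneg hy)

lemma subVec_apply (h : a - 1 < a + b) (j : Fin (a + b)) :
    subVec a b y j = if (j : ℕ) < a then y j else y j - y ⟨a - 1, h⟩ :=
  rfl

lemma sum_subVec (h : a - 1 < a + b) :
    ∑ j, subVec a b y j = ∑ j, y j - b * y ⟨a - 1, h⟩ := by
  simp only [subVec_apply h, Fin.sum_univ_add, Fin.val_castAdd, Fin.is_lt, ↓reduceIte,
    Fin.val_natAdd, add_lt_iff_neg_left, not_lt_zero, sum_sub_distrib, sum_const, card_univ,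
    Fintype.card_fin, nsmul_eq_mul]
  ring

lemma sum_eq (h : a - 1 < a + b) : ∑ j, Tab a b y j = ∑ j, y j - b * y ⟨a - 1, h⟩ :=
  (Equiv.sum_comp _ _).trans (sum_subVec h)

variable (h₁ : a - 1 < a + b) (h₂ : a + b - 1 < a + b)

lemma subVec_le (hy : y ∈ Lambda (a + b)) (hsep : 2 * y ⟨a - 1, h₁⟩ ≤ y ⟨a + b - 1, h₂⟩)
    (j : Fin (a + b)) : subVec a b y j ≤ y ⟨a + b - 1, h₂⟩ - y ⟨a - 1, h₁⟩ := by
  have hjtop : y j ≤ y ⟨a + b - 1, h₂⟩ := hy.2 (Fin.le_def.2 (by simp; omega))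
  rw [subVec_apply h₁]
  split_ifs with hj
  · have : y j ≤ y ⟨a - 1, h₁⟩ := hy.2 (Fin.le_def.2 (by simp; omega))
    linarith
  · linarith

lemma subVec_top (hy : y ∈ Lambda (a + b)) (hlt : y ⟨a - 1, h₁⟩ < y ⟨a + b - 1, h₂⟩) :
    subVec a b y ⟨a + b - 1, h₂⟩ = y ⟨a + b - 1, h₂⟩ - y ⟨a - 1, h₁⟩ := by
  rw [subVec_apply h₁, if_neg]
  intro htop
  exact hlt.not_ge (hy.2 (Fin.le_def.2 (by simp only at htop ⊢; omega)))

lemma apply_top (hy : y ∈ Lambda (a + b)) (hsep : 2 * y ⟨a - 1, h₁⟩ < y ⟨a + b - 1, h₂⟩) :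
    Tab a b y ⟨a + b - 1, h₂⟩ = y ⟨a + b - 1, h₂⟩ - y ⟨a - 1, h₁⟩ := by
  have hlt : y ⟨a - 1, h₁⟩ < y ⟨a + b - 1, h₂⟩ := by linarith [hy.1 ⟨a - 1, h₁⟩]
  rw [← subVec_top h₁ h₂ hy hlt]
  refine comp_sort_eq_of_forall_le (fun j => ?_) (fun i => Fin.le_def.2 (by simp; omega))
  rw [subVec_top h₁ h₂ hy hlt]
  exact subVec_le h₁ h₂ hy hsep.le j

lemma sum_le_of_mem_Lambda (hy : y ∈ Lambda (a + b)) :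
    ∑ j, y j ≤ a * y ⟨a - 1, h₁⟩ + b * y ⟨a + b - 1, h₂⟩ := by
  calc ∑ j, y j
      = ∑ i : Fin a, y (Fin.castAdd b i) + ∑ i : Fin b, y (Fin.natAdd a i) := Fin.sum_univ_add y
    _ ≤ ∑ _ : Fin a, y ⟨a - 1, h₁⟩ + ∑ _ : Fin b, y ⟨a + b - 1, h₂⟩ := by
      gcongr with i _ i _ <;> exact hy.2 (Fin.le_def.2 (by simp; omega))
    _ = a * y ⟨a - 1, h₁⟩ + b * y ⟨a + b - 1, h₂⟩ := by simp

lemma excess_le_mul (hy : y ∈ Lambda (a + b)) :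
    ∑ j, y j - b * y ⟨a + b - 1, h₂⟩ ≤ a * y ⟨a - 1, h₁⟩ := by
  linarith [sum_le_of_mem_Lambda h₁ h₂ hy]

lemma excess_eq (hy : y ∈ Lambda (a + b)) (hsep : 2 * y ⟨a - 1, h₁⟩ < y ⟨a + b - 1, h₂⟩) :
    ∑ j, Tab a b y j - b * Tab a b y ⟨a + b - 1, h₂⟩ = ∑ j, y j - b * y ⟨a + b - 1, h₂⟩ := by
  rw [sum_eq h₁, apply_top h₁ h₂ hy hsep]
  ring

lemma iterate_descent (ha : 1 ≤ a) {x : Fin (a + b) → ℝ} (hx : x ∈ Lambda (a + b))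
    (hσ : b * x ⟨a + b - 1, h₂⟩ < ∑ i, x i)
    (hsep : ∀ k, (Tab a b)^[k] x ∈ Lambda (a + b) →
      b * (Tab a b)^[k] x ⟨a + b - 1, h₂⟩ < ∑ i, (Tab a b)^[k] x i →
      2 * (Tab a b)^[k] x ⟨a - 1, h₁⟩ < (Tab a b)^[k] x ⟨a + b - 1, h₂⟩) (k : ℕ) :
    (Tab a b)^[k] x ∈ Lambda (a + b) ∧
      ∑ i, (Tab a b)^[k] x i - b * (Tab a b)^[k] x ⟨a + b - 1, h₂⟩ =
        ∑ i, x i - b * x ⟨a + b - 1, h₂⟩ ∧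
      (Tab a b)^[k] x ⟨a + b - 1, h₂⟩ + k * ((∑ i, x i - b * x ⟨a + b - 1, h₂⟩) / a) ≤
        x ⟨a + b - 1, h₂⟩ := by
  set δ := ∑ i, x i - b * x ⟨a + b - 1, h₂⟩
  induction k with
  | zero => simp [hx, δ]
  | succ k ih =>
    obtain ⟨hmem, hexc, htop⟩ := ih
    have hsep_k := hsep k hmem (by linarith)
    have hmid : δ / a ≤ (Tab a b)^[k] x ⟨a - 1, h₁⟩ := by
      rw [div_le_iff₀' (by exact_mod_cast ha), ← hexc]
      exact excess_le_mul h₁ h₂ hmem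
    rw [Function.iterate_succ_apply']
    refine ⟨mem_Lambda hmem, (excess_eq h₁ h₂ hmem hsep_k).trans hexc, ?_⟩
    rw [apply_top h₁ h₂ hmem hsep_k]
    push_cast
    linarith

end Tab

/-- for `a ≥ 1`, `b ≥ 2`, almost every orbit starting in the
complement of `A` visits `Θ = {x ∈ Λ^{a+b} : σ(x) > b·x_{a+b}, 2x_a ≥ x_{a+b}}`. -/
theorem statement16 (a b : ℕ) (ha : 1 ≤ a) :
    ∀ᵐ x : Fin (a + b) → ℝ,
      (x ∈ Lambda (a + b) ∧ (b : ℝ) * x ⟨a + b - 1, by omega⟩ < ∑ i, x i) →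
      ∃ k : ℕ,
        (Tab a b)^[k] x ∈ Lambda (a + b) ∧
        (b : ℝ) * (Tab a b)^[k] x ⟨a + b - 1, by omega⟩ < ∑ i, (Tab a b)^[k] x i ∧
        (Tab a b)^[k] x ⟨a + b - 1, by omega⟩ ≤ 2 * (Tab a b)^[k] x ⟨a - 1, by omega⟩ := by
  refine ae_of_all _ fun x ⟨hx, hσ⟩ => ?_
  by_contra! hsep
  have h₁ : a - 1 < a + b := by omega
  have h₂ : a + b - 1 < a + b := by omega
  obtain ⟨k, hk⟩ := exists_nat_gt (x ⟨a + b - 1, h₂⟩ / ((∑ i, x i - b * x ⟨a + b - 1, h₂⟩) / a))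
  obtain ⟨hmem, -, hdescent⟩ := Tab.iterate_descent h₁ h₂ ha hx hσ hsep k
  have hδ : 0 < (∑ i, x i - b * x ⟨a + b - 1, h₂⟩) / a :=
    div_pos (sub_pos.2 hσ) (by exact_mod_cast ha)
  have htop_nonneg := hmem.1 ⟨a + b - 1, h₂⟩
  have hk' := (div_lt_iff₀ hδ).1 hk
  linarith
end

section
/- Let a,b ≥ 1 and n = a+b. Let M = M_{π_1}·M_{π_2}···M_{π_m} be any product of m ≥ 1 matrices from the family {M_π : π ∈ Π_{a,b}}, and for 1 ≤ j ≤ n let c_j denote the sum of the entries in the j-th column of M. Then max_{1≤j≤n} c_j = max_{a≤j≤n} c_j; consequently c_1 + … + c_{a−1} ≤ (a−1)·(c_a + c_{a+1} + … + c_n). -/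
/-!
Column sums transform as row vectors: the column sums of `M * M_π` are `c ᵥ* M_π`, whose
entries are single entries `c i` of `c`, except at column `π(a-1)`, which carries the tail sum
`c_{a-1} + … + c_{n-1}` (0-based). If `c ≥ 0` attains its maximum at some index `≥ a - 1`,
this tail sum dominates every entry of `c`, so `c ᵥ* M_π` attains its maximum at `π(a-1)`,
and `π(a-1) ≥ a - 1` because `π` is increasing on `{0, …, a-1}`. Induction on the number of
factors gives the first claim; the second follows by bounding each head column sum by the
maximum.
-/

open MeasureTheory Filter Topology

/-- `Π_{a,b}` (0-based): permutations `π` of `{0,…,a+b-1}` which are strictly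
increasing on the first `a` indices and on the last `b` indices. -/
def IsShuffle (a b : ℕ) (π : Equiv.Perm (Fin (a + b))) : Prop :=
  (∀ i j : Fin (a + b), i < j → (j : ℕ) < a → π i < π j) ∧
  (∀ i j : Fin (a + b), a ≤ (i : ℕ) → i < j → π i < π j)

/-- The matrix `M_π` (0-based): its `π(i)`-th column is the standard basis
vector `e_i` for `i ≠ a-1` (1-based `i ≠ a`), and its `π(a-1)`-th column is
`e_{a-1} + e_a + … + e_{a+b-1}` (1-based `e_a + … + e_{a+b}`). -/
def Mmat (a b : ℕ) (π : Equiv.Perm (Fin (a + b))) : Matrix (Fin (a + b)) (Fin (a + b)) ℤ :=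
  fun r c =>
    if (π.symm c : ℕ) = a - 1 then (if a - 1 ≤ (r : ℕ) then 1 else 0)
    else (if r = π.symm c then 1 else 0)

open Matrix Finset

def AttainsMaxFrom {R : Type*} [LE R] {n : ℕ} (m : ℕ) (v : Fin n → R) : Prop :=
  ∃ k₀ : Fin n, m ≤ (k₀ : ℕ) ∧ ∀ k, v k ≤ v k₀

theorem AttainsMaxFrom.sum_lt_le_mul_sum_le {R : Type*} [Semiring R] [PartialOrder R]
    [IsOrderedRing R] {n m : ℕ} {v : Fin n → R} (hv : 0 ≤ v) (h : AttainsMaxFrom m v) :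
    ∑ k : Fin n with k.val < m, v k ≤ m * ∑ k : Fin n with m ≤ k.val, v k := by
  obtain ⟨k₀, hk₀, hmax⟩ := h
  have hcard : #{k : Fin n | k.val < m} = m := by
    rw [Fin.card_filter_val_lt]; omega
  calc ∑ k : Fin n with k.val < m, v k
      ≤ ∑ k : Fin n with k.val < m, v k₀ := sum_le_sum fun k _ => hmax k
    _ = m * v k₀ := by rw [sum_const, hcard, nsmul_eq_mul]
    _ ≤ m * ∑ k : Fin n with m ≤ k.val, v k := by
        gcongr
        exact single_le_sum (fun k _ => hv k) (by simpa using hk₀)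

theorem one_vecMul_apply {R m n : Type*} [NonAssocSemiring R] [Fintype m] (M : Matrix m n R)
    (j : n) : (1 ᵥ* M) j = ∑ i, M i j := by
  simp [vecMul, dotProduct]

theorem IsShuffle.le_apply {a b : ℕ} {π : Equiv.Perm (Fin (a + b))} (hπ : IsShuffle a b π) :
    ∀ (m : ℕ) (hm : m < a + b), m < a → m ≤ (π ⟨m, hm⟩ : ℕ)
  | 0, _, _ => Nat.zero_le _
  | m + 1, hm, hma => by
    have hlt : (π ⟨m, by omega⟩ : ℕ) < π ⟨m + 1, hm⟩ :=
      hπ.1 ⟨m, by omega⟩ ⟨m + 1, hm⟩ (Fin.mk_lt_mk.2 m.lt_succ_self) hma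
    have := hπ.le_apply m (by omega) (by omega)
    omega

section vecMul_Mmat

variable {a b : ℕ} (π : Equiv.Perm (Fin (a + b))) (v : Fin (a + b) → ℤ) {j : Fin (a + b)}

theorem vecMul_Mmat_of_ne (hj : (π.symm j : ℕ) ≠ a - 1) :
    (v ᵥ* Mmat a b π) j = v (π.symm j) := by
  simp [vecMul, dotProduct, Mmat, hj]

theorem vecMul_Mmat_of_eq (hj : (π.symm j : ℕ) = a - 1) :
    (v ᵥ* Mmat a b π) j = ∑ s : Fin (a + b) with a - 1 ≤ s.val, v s := by
  simp [vecMul, dotProduct, Mmat, hj, sum_filter]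

variable {π v}

theorem vecMul_Mmat_nonneg (hv : 0 ≤ v) : 0 ≤ v ᵥ* Mmat a b π := by
  intro j
  by_cases hj : (π.symm j : ℕ) = a - 1
  · rw [Pi.zero_apply, vecMul_Mmat_of_eq π v hj]
    exact sum_nonneg fun s _ => hv s
  · rw [Pi.zero_apply, vecMul_Mmat_of_ne π v hj]
    exact hv _

theorem AttainsMaxFrom.vecMul_Mmat (ha : 1 ≤ a) (hπ : IsShuffle a b π) (hv : 0 ≤ v)
    (h : AttainsMaxFrom (a - 1) v) : AttainsMaxFrom (a - 1) (v ᵥ* Mmat a b π) := by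
  obtain ⟨k₀, hk₀, hmax⟩ := h
  have hi : a - 1 < a + b := lt_of_le_of_lt hk₀ k₀.isLt
  have htail : ∀ k, v k ≤ ∑ s : Fin (a + b) with a - 1 ≤ s.val, v s := fun k =>
    (hmax k).trans (single_le_sum (fun s _ => hv s) (by simpa using hk₀))
  refine ⟨π ⟨a - 1, hi⟩, hπ.le_apply _ hi (by omega), fun k => ?_⟩
  rw [vecMul_Mmat_of_eq π v (j := π ⟨a - 1, hi⟩) (by simp)]
  by_cases hk : (π.symm k : ℕ) = a - 1
  · rw [vecMul_Mmat_of_eq π v hk]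
  · rw [vecMul_Mmat_of_ne π v hk]
    exact htail _

end vecMul_Mmat

theorem one_vecMul_prod_Mmat_nonneg_and_attainsMaxFrom {a b : ℕ} (ha : 1 ≤ a)
    (L : List (Equiv.Perm (Fin (a + b)))) (hL : ∀ π ∈ L, IsShuffle a b π) :
    0 ≤ 1 ᵥ* (L.map (Mmat a b)).prod ∧
      AttainsMaxFrom (a - 1) (1 ᵥ* (L.map (Mmat a b)).prod) := by
  induction L using List.reverseRecOn with
  | nil =>
    exact ⟨by simp, ⟨a - 1, by omega⟩, le_rfl, fun k => by simp⟩
  | append_singleton L π ih =>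
    obtain ⟨hv, hmax⟩ := ih fun π' h' => hL π' (by simp [h'])
    have hπ : IsShuffle a b π := hL π (by simp)
    simp only [List.map_append, List.map_singleton, List.prod_append, List.prod_singleton,
      ← vecMul_vecMul]
    exact ⟨vecMul_Mmat_nonneg hv, hmax.vecMul_Mmat ha hπ hv⟩

theorem statement17_general (a b : ℕ) (ha : 1 ≤ a)
    (L : List (Equiv.Perm (Fin (a + b))))
    (hmem : ∀ π ∈ L, IsShuffle a b π) :
    (∃ k₀ : Fin (a + b), a - 1 ≤ (k₀ : ℕ) ∧
      ∀ k : Fin (a + b),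
        (∑ r, (L.map (Mmat a b)).prod r k) ≤ ∑ r, (L.map (Mmat a b)).prod r k₀) ∧
    ∑ k ∈ Finset.univ.filter (fun k : Fin (a + b) => (k : ℕ) < a - 1),
        (∑ r, (L.map (Mmat a b)).prod r k) ≤
      ((a : ℤ) - 1) *
        ∑ k ∈ Finset.univ.filter (fun k : Fin (a + b) => a - 1 ≤ (k : ℕ)),
          (∑ r, (L.map (Mmat a b)).prod r k) := by
  obtain ⟨hnonneg, hmax⟩ := one_vecMul_prod_Mmat_nonneg_and_attainsMaxFrom ha L hmem
  simp only [← one_vecMul_apply]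
  refine ⟨hmax, ?_⟩
  have hcast : ((a - 1 : ℕ) : ℤ) = (a : ℤ) - 1 := by omega
  rw [← hcast]
  exact hmax.sum_lt_le_mul_sum_le hnonneg

/-- for any nonempty product `M` of matrices `M_π`, `π ∈ Π_{a,b}`,
writing `c_j` for the sum of the entries of the `j`-th column of `M`, the
maximum of the `c_j` is attained among the columns `j` with `a ≤ j ≤ n`
(1-based), and consequently `c_1 + … + c_{a-1} ≤ (a-1)·(c_a + … + c_n)`. -/
theorem statement17 (a b : ℕ) (ha : 1 ≤ a) (hb : 1 ≤ b)
    (L : List (Equiv.Perm (Fin (a + b)))) (hL : L ≠ [])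
    (hmem : ∀ π ∈ L, IsShuffle a b π) :
    (∃ k₀ : Fin (a + b), a - 1 ≤ (k₀ : ℕ) ∧
      ∀ k : Fin (a + b),
        (∑ r, (L.map (Mmat a b)).prod r k) ≤ ∑ r, (L.map (Mmat a b)).prod r k₀) ∧
    ∑ k ∈ Finset.univ.filter (fun k : Fin (a + b) => (k : ℕ) < a - 1),
        (∑ r, (L.map (Mmat a b)).prod r k) ≤
      ((a : ℤ) - 1) *
        ∑ k ∈ Finset.univ.filter (fun k : Fin (a + b) => a - 1 ≤ (k : ℕ)),
          (∑ r, (L.map (Mmat a b)).prod r k) :=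
  statement17_general a b ha L hmem
end

section
/- Let a ≥ 2, b ≥ 1 and 1 ≤ i ≤ a−1 be integers and let T be the modified subtractive algorithm on Λ^{a+b}. Then: (1) if x ∈ Λ^{a+b} satisfies σ(x) ≤ b·x_{a+b}, then σ(T(x)) ≤ b·(T(x))_{a+b} (i.e. T(A) ⊆ A where A = {x ∈ Λ^{a+b} : σ(x) ≤ b·x_{a+b}}); (2) if in addition b ≤ a+1−i, then for every x ∈ Λ^{a+b} with σ(x) > b·x_{a+b} one has σ(T(x)) ≥ b·(T(x))_{a+b}. -/
open MeasureTheory Filter Topology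

/-- The modified subtractive algorithm: nondecreasing rearrangement of
`(x₁,…,x_a, x_{a+1}-x_i,…,x_{a+b}-x_i)` (1-based `i`; 0-based index `i-1`). -/
noncomputable def Tmod (a b i : ℕ) (x : Fin (a + b) → ℝ) : Fin (a + b) → ℝ :=
  let s : ℝ := if h : i - 1 < a + b then x ⟨i - 1, h⟩ else 0
  let y : Fin (a + b) → ℝ := fun j => if (j : ℕ) < a then x j else x j - s
  y ∘ Tuple.sort y

/-!
Write `s = x_i` and `y` for `x` with `s` subtracted from its last `b` coordinates. Since `T x` is
a rearrangement of `y`, `σ(T x) = σ(x) - b s`, and its last coordinate is `max y`, which lies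
between `x_{a+b} - s` and `max (x_a) (x_{a+b} - s)`. The lower bound gives (1). For (2), when
`b ≤ a + 1 - i` the coordinates `x_{a+1-b}, …, x_a` all dominate `x_i` and the last `b` coordinates
dominate `x_a`, so `b (x_a + s) ≤ σ(x)`; with the upper bound this gives `b · max y ≤ σ(x) - b s`.
-/

noncomputable def subtractTail (a b : ℕ) (s : ℝ) (x : Fin (a + b) → ℝ) : Fin (a + b) → ℝ :=
  fun j => if (j : ℕ) < a then x j else x j - s

theorem comp_sort_eq_sup'_of_isTop {n : ℕ} {α : Type*} [LinearOrder α] (y : Fin n → α)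
    {m : Fin n} (hm : IsTop m) :
    (y ∘ Tuple.sort y) m = Finset.univ.sup' ⟨m, Finset.mem_univ m⟩ y := by
  refine le_antisymm (Finset.le_sup' y (Finset.mem_univ _)) (Finset.sup'_le _ _ fun t _ => ?_)
  calc y t = (y ∘ Tuple.sort y) ((Tuple.sort y).symm t) := by simp
    _ ≤ (y ∘ Tuple.sort y) m := Tuple.monotone_sort y (hm _)

theorem Tmod_eq_comp_sort {a b i : ℕ} (x : Fin (a + b) → ℝ) (h : i - 1 < a + b) :
    Tmod a b i x =
      subtractTail a b (x ⟨i - 1, h⟩) x ∘ Tuple.sort (subtractTail a b (x ⟨i - 1, h⟩) x) := by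
  simp only [Tmod, dif_pos h]
  rfl

theorem sum_subtractTail (a b : ℕ) (s : ℝ) (x : Fin (a + b) → ℝ) :
    ∑ t, subtractTail a b s x t = ∑ t, x t - b * s := by
  simp only [subtractTail, Fin.sum_univ_add, Fin.val_castAdd, Fin.is_lt, ↓reduceIte,
    Fin.val_natAdd, add_lt_iff_neg_left, not_lt_zero, Finset.sum_sub_distrib, Finset.sum_const,
    Finset.card_univ, Fintype.card_fin, nsmul_eq_mul]
  ring

theorem subtractTail_of_le {a b : ℕ} (s : ℝ) (x : Fin (a + b) → ℝ) {j : Fin (a + b)}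
    (hj : a ≤ j) : subtractTail a b s x j = x j - s :=
  if_neg (not_lt.mpr hj)

theorem subtractTail_le_max {a b : ℕ} (s : ℝ) {x : Fin (a + b) → ℝ} (hx : Monotone x)
    {k m : Fin (a + b)} (hk : (k : ℕ) + 1 = a) (hm : IsTop m) (j : Fin (a + b)) :
    subtractTail a b s x j ≤ max (x k) (x m - s) := by
  by_cases hja : (j : ℕ) < a
  · simp only [subtractTail, if_pos hja]
    exact le_max_of_le_left (hx (by rw [Fin.le_def]; omega))
  · simp only [subtractTail, if_neg hja]
    exact le_max_of_le_right (by linarith [hx (hm j)])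

theorem sum_Tmod {a b i : ℕ} (x : Fin (a + b) → ℝ) (h : i - 1 < a + b) :
    ∑ t, Tmod a b i x t = ∑ t, x t - b * x ⟨i - 1, h⟩ := by
  rw [Tmod_eq_comp_sort x h]
  exact (Equiv.sum_comp _ _).trans (sum_subtractTail _ _ _ _)

theorem sub_le_Tmod_of_isTop {a b i : ℕ} (x : Fin (a + b) → ℝ) (h : i - 1 < a + b)
    (hb : 1 ≤ b) {m : Fin (a + b)} (hm : IsTop m) :
    x m - x ⟨i - 1, h⟩ ≤ Tmod a b i x m := by
  have ham : a ≤ (m : ℕ) := Fin.le_def.mp (hm ⟨a, by omega⟩)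
  rw [Tmod_eq_comp_sort x h, comp_sort_eq_sup'_of_isTop _ hm, ← subtractTail_of_le _ x ham]
  exact Finset.le_sup' _ (Finset.mem_univ m)

theorem Tmod_le_max_of_isTop {a b i : ℕ} {x : Fin (a + b) → ℝ} (hx : Monotone x)
    (h : i - 1 < a + b) {k m : Fin (a + b)} (hk : (k : ℕ) + 1 = a) (hm : IsTop m) :
    Tmod a b i x m ≤ max (x k) (x m - x ⟨i - 1, h⟩) := by
  rw [Tmod_eq_comp_sort x h, comp_sort_eq_sup'_of_isTop _ hm]
  exact Finset.sup'_le _ _ fun j _ => subtractTail_le_max _ hx hk hm j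

theorem card_Ici_mul_le_sum {n : ℕ} {x : Fin n → ℝ} (hx : x ∈ Lambda n) (j : Fin n) :
    ((n - j : ℕ) : ℝ) * x j ≤ ∑ t, x t := by
  calc ((n - j : ℕ) : ℝ) * x j = (Finset.Ici j).card • x j := by
        rw [Fin.card_Ici, nsmul_eq_mul]
    _ ≤ ∑ t ∈ Finset.Ici j, x t :=
        Finset.card_nsmul_le_sum _ _ _ fun t ht => hx.2 (Finset.mem_Ici.mp ht)
    _ ≤ ∑ t, x t :=
        Finset.sum_le_sum_of_subset_of_nonneg (Finset.subset_univ _) fun t _ _ => hx.1 t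

theorem mul_add_le_sum {a b : ℕ} {x : Fin (a + b) → ℝ} (hx : x ∈ Lambda (a + b))
    {j k : Fin (a + b)} (hj : (j : ℕ) + b ≤ a) (hk : (k : ℕ) + 1 = a) :
    b * (x j + x k) ≤ ∑ t, x t := by
  have hhead : x ∘ Fin.castAdd b ∈ Lambda a :=
    ⟨fun t => hx.1 _, fun s t hst => hx.2 (show Fin.castAdd b s ≤ Fin.castAdd b t from hst)⟩
  have hbj : (b : ℝ) ≤ ((a - j : ℕ) : ℝ) := by exact_mod_cast (by omega : b ≤ a - j)
  have htail : (b : ℝ) * x k ≤ ∑ t : Fin b, x (Fin.natAdd a t) := by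
    simpa only [nsmul_eq_mul, Finset.card_univ, Fintype.card_fin] using
      Finset.card_nsmul_le_sum Finset.univ (fun t => x (Fin.natAdd a t)) (x k) fun t _ =>
        hx.2 (Fin.le_def.mpr (by simp only [Fin.val_natAdd]; omega))
  calc b * (x j + x k) = b * x j + b * x k := mul_add _ _ _
    _ ≤ ((a - j : ℕ) : ℝ) * x j + ∑ t : Fin b, x (Fin.natAdd a t) :=
        add_le_add (mul_le_mul_of_nonneg_right hbj (hx.1 j)) htail
    _ ≤ ∑ t : Fin a, x (Fin.castAdd b t) + ∑ t : Fin b, x (Fin.natAdd a t) := by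
        gcongr
        exact card_Ici_mul_le_sum hhead ⟨j, by omega⟩
    _ = ∑ t, x t := (Fin.sum_univ_add x).symm

/-- (1) `T(A) ⊆ A`, i.e. `x ∈ Λ^{a+b}` with `σ(x) ≤ b·x_{a+b}`
implies `σ(T(x)) ≤ b·(T(x))_{a+b}`; (2) if moreover `b ≤ a+1-i`, then
`σ(x) > b·x_{a+b}` implies `σ(T(x)) ≥ b·(T(x))_{a+b}` (i.e. `T⁻¹(A) ⊆ A`). -/
theorem statement18 (a b i : ℕ) (hb : 1 ≤ b)
    (hi1 : 1 ≤ i) (hi2 : i ≤ a - 1) :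
    (∀ x ∈ Lambda (a + b), ∑ t, x t ≤ (b : ℝ) * x ⟨a + b - 1, by omega⟩ →
      ∑ t, Tmod a b i x t ≤ (b : ℝ) * Tmod a b i x ⟨a + b - 1, by omega⟩) ∧
    (b ≤ a + 1 - i → ∀ x ∈ Lambda (a + b),
      (b : ℝ) * x ⟨a + b - 1, by omega⟩ < ∑ t, x t →
      (b : ℝ) * Tmod a b i x ⟨a + b - 1, by omega⟩ ≤ ∑ t, Tmod a b i x t) := by
  have hs : i - 1 < a + b := by omega
  have hm : IsTop (⟨a + b - 1, by omega⟩ : Fin (a + b)) := fun t => by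
    simp only [Fin.le_def]; omega
  have hb0 : (0 : ℝ) ≤ b := b.cast_nonneg
  refine ⟨fun x _ hσ => ?_, fun hbi x hx hσ => ?_⟩
  · rw [sum_Tmod x hs]
    have := mul_le_mul_of_nonneg_left (sub_le_Tmod_of_isTop x hs hb hm) hb0
    linarith
  · have hcount := mul_add_le_sum hx (j := ⟨i - 1, hs⟩) (k := ⟨a - 1, by omega⟩)
      (by simp only; omega) (by simp only; omega)
    have hmax := mul_le_mul_of_nonneg_left
      (Tmod_le_max_of_isTop hx.2 hs (k := ⟨a - 1, by omega⟩) (by simp only; omega) hm) hb0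
    rw [mul_max_of_nonneg _ _ hb0] at hmax
    rw [sum_Tmod x hs]
    refine hmax.trans (max_le ?_ ?_) <;> linarith
end
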